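/- arXiv:1811.09027 — 2 statements merged into one kernel-verified Lean document; each statement's English description precedes it below -/
import Mathlib

section
/- Let $M_0, M_1, M_2$ be matroids on a common finite ground set $N$, let $t$ be a positive integer, and let $\mu$ be a nonnegative integer with $t > 2\mu$. For $i \in \{0,1,2\}$, let $M'_i$ be the direct sum of $t$ disjoint copies of $M_i$, a matroid on the ground set $N' = \{1, \dots, t\} \times N$ consisting of copies $N_1, \dots, N_t$ of $N$. Suppose $R' \subseteq N'$ is a basis of $M'_0$ and is $\mu$-additively independent in both $M'_1$ and $M'_2$, i.e.\ for $i = 1, 2$ there exists $Q_i \subseteq R'$ with $|Q_i| \le \mu$ such that $R' \setminus Q_i$ is independent in $M'_i$. Then there exists $j \in \{1, \dots, t\}$ such that the set $R := \{e \in N : (j, e) \in R'\}$ is a basis of $M_0$ and is independent in both $M_1$ and $M_2$. -/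
open scoped Classical BigOperators

structure FinMatroid (α : Type*) where
  E : Finset α
  Indep : Finset α → Prop
  indep_subset_ground : ∀ ⦃I⦄, Indep I → I ⊆ E
  indep_empty : Indep ∅
  indep_subset : ∀ ⦃I J⦄, Indep J → I ⊆ J → Indep I
  indep_exchange : ∀ ⦃I J⦄, Indep I → Indep J → I.card < J.card →
    ∃ e ∈ J \ I, Indep (insert e I)

/-- The rank function of a matroid: the maximum cardinality of an independent subset. -/
noncomputable def FinMatroid.rank {α : Type*} (M : FinMatroid α) (A : Finset α) : ℕ :=
  A.powerset.sup fun I => if M.Indep I then I.card else 0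

lemma FinMatroid.card_le_rank {α : Type*} (M : FinMatroid α) {A I : Finset α}
    (hI : M.Indep I) (hIA : I ⊆ A) : I.card ≤ M.rank A := by
  have := Finset.le_sup (f := fun I => if M.Indep I then I.card else 0)
    (Finset.mem_powerset.mpr hIA)
  simpa [hI, FinMatroid.rank] using this

lemma FinMatroid.exists_rank_witness {α : Type*} (M : FinMatroid α) (A : Finset α) :
    ∃ I ⊆ A, M.Indep I ∧ I.card = M.rank A := by
  obtain ⟨I, hI, hEq⟩ := Finset.exists_mem_eq_sup A.powerset
    ⟨∅, Finset.empty_mem_powerset A⟩ (fun I => if M.Indep I then I.card else 0)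
  by_cases h : M.Indep I
  · exact ⟨I, Finset.mem_powerset.mp hI, h, by simp [FinMatroid.rank, hEq, h]⟩
  · refine ⟨∅, Finset.empty_subset A, M.indep_empty, ?_⟩
    simp [FinMatroid.rank, hEq, h]

/-- **Replication argument ruling out small additive violations (Theorem 5).**
Let `M'ᵢ` be the direct sum of `t` disjoint copies of `Mᵢ` (matroids on the ground set
`Fin t × α`, characterized by: a set is independent iff each of its `t` slices is
independent in `Mᵢ`). If `t > 2μ` and `R'` is a basis of `M'₀` that is `μ`-additively
independent in both `M'₁` and `M'₂`, then some slice of `R'` is a basis of `M₀` that is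
independent in both `M₁` and `M₂`. -/
theorem replication_yields_exact_basis
    {α : Type*} (N : Finset α) (M₀ M₁ M₂ : FinMatroid α)
    (hE₀ : M₀.E = N) (hE₁ : M₁.E = N) (hE₂ : M₂.E = N)
    (t μ : ℕ) (ht : 1 ≤ t) (htμ : 2 * μ < t)
    (M₀' M₁' M₂' : FinMatroid (Fin t × α))
    (hE₀' : M₀'.E = Finset.univ ×ˢ N)
    (hE₁' : M₁'.E = Finset.univ ×ˢ N)
    (hE₂' : M₂'.E = Finset.univ ×ˢ N)
    (hI₀' : ∀ I : Finset (Fin t × α),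
      M₀'.Indep I ↔ ∀ j : Fin t, M₀.Indep ((I.filter (fun p => p.1 = j)).image Prod.snd))
    (hI₁' : ∀ I : Finset (Fin t × α),
      M₁'.Indep I ↔ ∀ j : Fin t, M₁.Indep ((I.filter (fun p => p.1 = j)).image Prod.snd))
    (hI₂' : ∀ I : Finset (Fin t × α),
      M₂'.Indep I ↔ ∀ j : Fin t, M₂.Indep ((I.filter (fun p => p.1 = j)).image Prod.snd))
    (R' : Finset (Fin t × α))
    (hR'_basis : M₀'.Indep R' ∧ R'.card = M₀'.rank M₀'.E)
    (hR'_add₁ : ∃ Q ⊆ R', Q.card ≤ μ ∧ M₁'.Indep (R' \ Q))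
    (hR'_add₂ : ∃ Q ⊆ R', Q.card ≤ μ ∧ M₂'.Indep (R' \ Q)) :
    ∃ j : Fin t,
      M₀.Indep ((R'.filter (fun p => p.1 = j)).image Prod.snd) ∧
      ((R'.filter (fun p => p.1 = j)).image Prod.snd).card = M₀.rank M₀.E ∧
      M₁.Indep ((R'.filter (fun p => p.1 = j)).image Prod.snd) ∧
      M₂.Indep ((R'.filter (fun p => p.1 = j)).image Prod.snd) := by
  classical
  obtain ⟨hRind, hRcard⟩ := hR'_basis
  obtain ⟨Q₁, hQ₁R, hQ₁c, hQ₁ind⟩ := hR'_add₁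
  obtain ⟨Q₂, hQ₂R, hQ₂c, hQ₂ind⟩ := hR'_add₂
  set S : Finset (Fin t) := Q₁.image Prod.fst ∪ Q₂.image Prod.fst with hS
  have hScard : S.card < t := by
    calc S.card ≤ (Q₁.image Prod.fst).card + (Q₂.image Prod.fst).card :=
          Finset.card_union_le _ _
      _ ≤ Q₁.card + Q₂.card := by
          exact Nat.add_le_add (Finset.card_image_le) (Finset.card_image_le)
      _ ≤ μ + μ := Nat.add_le_add hQ₁c hQ₂c
      _ < t := by omega
  have hjex : ∃ j : Fin t, j ∉ S := by
    by_contra h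
    push_neg at h
    have : (Finset.univ : Finset (Fin t)) ⊆ S := fun j _ => h j
    have := Finset.card_le_card this
    simp at this
    omega
  obtain ⟨j, hj⟩ := hjex
  refine ⟨j, ?_, ?_, ?_, ?_⟩
  · exact (hI₀' R').mp hRind j
  · -- the basis part
    set r := M₀.rank M₀.E with hr
    -- each slice's image has the same card as the slice
    have himg : ∀ k : Fin t,
        ((R'.filter (fun p => p.1 = k)).image Prod.snd).card
          = (R'.filter (fun p => p.1 = k)).card := by
      intro k
      apply Finset.card_image_of_injOn
      intro p hp q hq hpq
      simp only [Finset.mem_coe, Finset.mem_filter] at hp hq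
      exact Prod.ext (hp.2.trans hq.2.symm) hpq
    -- each slice is ≤ r
    have hslice_le : ∀ k : Fin t, (R'.filter (fun p => p.1 = k)).card ≤ r := by
      intro k
      rw [← himg k]
      apply M₀.card_le_rank ((hI₀' R').mp hRind k)
      intro e he
      simp only [Finset.mem_image, Finset.mem_filter] at he
      obtain ⟨p, ⟨hpR, _⟩, hpe⟩ := he
      have := M₀'.indep_subset_ground hRind hpR
      rw [hE₀'] at this
      rw [Finset.mem_product] at this
      rw [hE₀]
      exact hpe ▸ this.2
    -- total card
    have hsum : ∑ k : Fin t, (R'.filter (fun p => p.1 = k)).card = R'.card :=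
      (Finset.card_eq_sum_card_fiberwise (f := Prod.fst) (t := Finset.univ)
        (fun x _ => Finset.mem_univ _)).symm
    -- rank of M₀'.E is at least t * r
    obtain ⟨B, hBE, hBind, hBcard⟩ := M₀.exists_rank_witness M₀.E
    have hB' : M₀'.Indep ((Finset.univ : Finset (Fin t)) ×ˢ B) := by
      rw [hI₀']
      intro k
      have : ((((Finset.univ : Finset (Fin t)) ×ˢ B).filter
          (fun p => p.1 = k)).image Prod.snd) = B := by
        ext e
        simp only [Finset.mem_image, Finset.mem_filter, Finset.mem_product,
          Finset.mem_univ, true_and]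
        constructor
        · rintro ⟨p, ⟨hpB, _⟩, hpe⟩; exact hpe ▸ hpB
        · intro he; exact ⟨(k, e), ⟨he, rfl⟩, rfl⟩
      rw [this]; exact hBind
    have hrank_ge : t * r ≤ M₀'.rank M₀'.E := by
      have hsub : (Finset.univ : Finset (Fin t)) ×ˢ B ⊆ M₀'.E := by
        rw [hE₀']
        exact Finset.product_subset_product_right (hE₀ ▸ hBE)
      have := M₀'.card_le_rank hB' hsub
      rwa [Finset.card_product, Finset.card_univ, Fintype.card_fin, hBcard] at this
    have htotal : t * r ≤ ∑ k : Fin t, (R'.filter (fun p => p.1 = k)).card := by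
      rw [hsum, hRcard]; exact hrank_ge
    -- conclude the slice at j has card exactly r
    have hj_eq : (R'.filter (fun p => p.1 = j)).card = r := by
      by_contra hne
      have hlt : (R'.filter (fun p => p.1 = j)).card < r :=
        lt_of_le_of_ne (hslice_le j) hne
      have : ∑ k : Fin t, (R'.filter (fun p => p.1 = k)).card
          < ∑ _k : Fin t, r :=
        Finset.sum_lt_sum (fun k _ => hslice_le k) ⟨j, Finset.mem_univ j, hlt⟩
      simp only [Finset.sum_const, Finset.card_univ, Fintype.card_fin, smul_eq_mul] at this
      omega
    rw [himg j, hj_eq]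
  · -- independence in M₁
    have hfe : R'.filter (fun p => p.1 = j) = (R' \ Q₁).filter (fun p => p.1 = j) := by
      ext p
      simp only [Finset.mem_filter, Finset.mem_sdiff]
      constructor
      · rintro ⟨hpR, hpj⟩
        refine ⟨⟨hpR, fun hpQ => hj ?_⟩, hpj⟩
        exact Finset.mem_union_left _ (Finset.mem_image.mpr ⟨p, hpQ, hpj⟩)
      · rintro ⟨⟨hpR, _⟩, hpj⟩; exact ⟨hpR, hpj⟩
    rw [hfe]
    exact (hI₁' _).mp hQ₁ind j
  · have hfe : R'.filter (fun p => p.1 = j) = (R' \ Q₂).filter (fun p => p.1 = j) := by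
      ext p
      simp only [Finset.mem_filter, Finset.mem_sdiff]
      constructor
      · rintro ⟨hpR, hpj⟩
        refine ⟨⟨hpR, fun hpQ => hj ?_⟩, hpj⟩
        exact Finset.mem_union_right _ (Finset.mem_image.mpr ⟨p, hpQ, hpj⟩)
      · rintro ⟨⟨hpR, _⟩, hpj⟩; exact ⟨hpR, hpj⟩
    rw [hfe]
    exact (hI₂' _).mp hQ₂ind j
end

section
/- Let $N$ be a finite ground set, $M_0 = (N, \mathcal{I}_0)$ a matroid on $N$, and for $i = 1, \dots, k$ let $M_i = (N_i, \mathcal{I}_i)$ be a matroid on $N_i \subseteq N$ with rank function $r_i$. Let $\Delta := \max_{e \in N} |\{i \in [k] : e \in N_i\}|$ and assume $\Delta \ge 1$. Let $w : N \to \mathbb{R}$, and suppose $x : N \to \mathbb{R}$ satisfies: $x(e) \ge 0$ for all $e$; $\sum_{e \in A} x(e) \le r_0(A)$ for all $A \subseteq N$ and $\sum_{e \in N} x(e) = r_0(N)$; and $\sum_{e \in A} x(e) \le r_i(A)$ for all $A \subseteq N_i$ and all $i \in [k]$. Then there exists $R \subseteq N$ such that $R$ is a basis of $M_0$, $\sum_{e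 \in R} w(e) \ge \sum_{e \in N} w(e) x(e)$, and for every $i \in [k]$ and every $T \subseteq R \cap N_i$, $|T| \le \Delta \cdot r_i(T)$. -/
open scoped Classical BigOperators

namespace FinMatroid

variable {α : Type*} {M : FinMatroid α} {I J A B S : Finset α}

lemma rank_le_card (M : FinMatroid α) (A : Finset α) : M.rank A ≤ A.card := by
  refine Finset.sup_le fun I hI => ?_
  split_ifs
  · exact Finset.card_le_card (Finset.mem_powerset.1 hI)
  · exact Nat.zero_le _

lemma le_rank (hI : M.Indep I) (hIA : I ⊆ A) : I.card ≤ M.rank A := by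
  have h := Finset.le_sup (f := fun I => if M.Indep I then I.card else 0)
    (Finset.mem_powerset.2 hIA)
  simpa [hI, FinMatroid.rank] using h

lemma exists_basis (M : FinMatroid α) (A : Finset α) :
    ∃ I, I ⊆ A ∧ M.Indep I ∧ I.card = M.rank A := by
  obtain ⟨I, hI, hEq⟩ := Finset.exists_mem_eq_sup A.powerset ⟨∅, by simp⟩
    (fun I => if M.Indep I then I.card else 0)
  by_cases h : M.Indep I
  · exact ⟨I, Finset.mem_powerset.1 hI, h, by rw [FinMatroid.rank, hEq]; simp [h]⟩
  · refine ⟨∅, by simp, M.indep_empty, ?_⟩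
    have h0 : M.rank A = 0 := by rw [FinMatroid.rank, hEq]; simp [h]
    simp [h0]

lemma rank_indep (hI : M.Indep A) : M.rank A = A.card :=
  le_antisymm (rank_le_card M A) (le_rank hI (subset_refl A))

lemma indep_of_rank_eq (h : M.rank A = A.card) : M.Indep A := by
  obtain ⟨I, hIA, hInd, hcard⟩ := M.exists_basis A
  have : I = A := Finset.eq_of_subset_of_card_le hIA (by omega)
  rwa [← this]

lemma rank_mono (h : A ⊆ B) : M.rank A ≤ M.rank B := by
  obtain ⟨I, hIA, hInd, hcard⟩ := M.exists_basis A
  rw [← hcard]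
  exact le_rank hInd (hIA.trans h)

lemma rank_empty (M : FinMatroid α) : M.rank ∅ = 0 :=
  Nat.le_antisymm (by simpa using M.rank_le_card ∅) (Nat.zero_le _)

lemma augment (hI : M.Indep I) (hIA : I ⊆ A) (h : I.card < M.rank A) :
    ∃ e ∈ A, e ∉ I ∧ M.Indep (insert e I) := by
  obtain ⟨J, hJA, hJInd, hJcard⟩ := M.exists_basis A
  obtain ⟨e, he, hins⟩ := M.indep_exchange hI hJInd (by omega)
  rw [Finset.mem_sdiff] at he
  exact ⟨e, hJA he.1, he.2, hins⟩

lemma exists_basis_superset (hI : M.Indep I) (hIA : I ⊆ A) :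
    ∃ J, I ⊆ J ∧ J ⊆ A ∧ M.Indep J ∧ J.card = M.rank A := by
  have key : ∀ n I, M.Indep I → I ⊆ A → M.rank A = I.card + n →
      ∃ J, I ⊆ J ∧ J ⊆ A ∧ M.Indep J ∧ J.card = M.rank A := by
    intro n
    induction n with
    | zero => intro I hI hIA hr; exact ⟨I, subset_refl I, hIA, hI, by omega⟩
    | succ n ih =>
      intro I hI hIA hr
      obtain ⟨e, heA, heI, hins⟩ := augment hI hIA (by omega)
      obtain ⟨J, hJ1, hJ2, hJ3, hJ4⟩ := ih (insert e I) hins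
        (Finset.insert_subset heA hIA) (by rw [Finset.card_insert_of_notMem heI]; omega)
      exact ⟨J, (Finset.subset_insert e I).trans hJ1, hJ2, hJ3, hJ4⟩
  have hle : I.card ≤ M.rank A := le_rank hI hIA
  exact key (M.rank A - I.card) I hI hIA (by omega)

lemma rank_union_le_card (M : FinMatroid α) (A B : Finset α) :
    M.rank (A ∪ B) ≤ M.rank A + B.card := by
  obtain ⟨K, hKA, hKInd, hKcard⟩ := M.exists_basis (A ∪ B)
  have h1 : (K ∩ A).card ≤ M.rank A := le_rank (M.indep_subset hKInd Finset.inter_subset_left)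
    Finset.inter_subset_right
  have h2 : (K \ A) ⊆ B := by
    intro x hx
    rw [Finset.mem_sdiff] at hx
    rcases Finset.mem_union.1 (hKA hx.1) with h | h
    · exact absurd h hx.2
    · exact h
  have h3 : (K ∩ A).card + (K \ A).card = K.card := Finset.card_inter_add_card_sdiff K A
  have h4 : (K \ A).card ≤ B.card := Finset.card_le_card h2
  omega

lemma rank_insert_le (M : FinMatroid α) (e : α) (A : Finset α) :
    M.rank (insert e A) ≤ M.rank A + 1 := by
  have h := M.rank_union_le_card A {e}
  have : insert e A = A ∪ {e} := by
    ext x; simp [or_comm]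
  rw [this]
  simpa using h

lemma submodular (M : FinMatroid α) (A B : Finset α) :
    M.rank (A ∪ B) + M.rank (A ∩ B) ≤ M.rank A + M.rank B := by
  obtain ⟨I, hIA, hIInd, hIcard⟩ := M.exists_basis (A ∩ B)
  obtain ⟨J, hIJ, hJsub, hJInd, hJcard⟩ := exists_basis_superset hIInd
    (hIA.trans (Finset.inter_subset_left.trans Finset.subset_union_left))
  have hJAB : (J ∩ (A ∩ B)).card = I.card := by
    refine le_antisymm ?_ (Finset.card_le_card ?_)
    · rw [hIcard]
      exact le_rank (M.indep_subset hJInd Finset.inter_subset_left) Finset.inter_subset_right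
    · exact Finset.subset_inter hIJ hIA
  have hd : (J ∩ A).card + (J ∩ B).card = (J ∩ (A ∪ B)).card + (J ∩ (A ∩ B)).card := by
    rw [← Finset.card_union_add_card_inter]
    congr 2
    · exact (Finset.inter_union_distrib_left J A B).symm
    · ext x; simp; tauto
  have hJ' : J ∩ (A ∪ B) = J := Finset.inter_eq_left.2 hJsub
  have h1 : (J ∩ A).card ≤ M.rank A := le_rank (M.indep_subset hJInd Finset.inter_subset_left)
    Finset.inter_subset_right
  have h2 : (J ∩ B).card ≤ M.rank B := le_rank (M.indep_subset hJInd Finset.inter_subset_left)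
    Finset.inter_subset_right
  rw [hJ'] at hd
  omega

/-- Restriction of a matroid to a subset of its ground set. -/
def restrict (M : FinMatroid α) (S : Finset α) : FinMatroid α where
  E := S
  Indep I := M.Indep I ∧ I ⊆ S
  indep_subset_ground := fun I h => h.2
  indep_empty := ⟨M.indep_empty, Finset.empty_subset S⟩
  indep_subset := fun I J hJ hIJ => ⟨M.indep_subset hJ.1 hIJ, hIJ.trans hJ.2⟩
  indep_exchange := by
    intro I J hI hJ hcard
    obtain ⟨e, he, hins⟩ := M.indep_exchange hI.1 hJ.1 hcard
    refine ⟨e, he, hins, Finset.insert_subset (hJ.2 (Finset.mem_sdiff.1 he).1) hI.2⟩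

lemma restrict_rank (M : FinMatroid α) (hAS : A ⊆ S) : (M.restrict S).rank A = M.rank A := by
  unfold FinMatroid.rank
  refine Finset.sup_congr rfl fun I hI => ?_
  have hIS : I ⊆ S := (Finset.mem_powerset.1 hI).trans hAS
  by_cases h : M.Indep I <;> simp [restrict, h, hIS]

/-- Contraction of a matroid by a subset. -/
noncomputable def contract (M : FinMatroid α) (S : Finset α) : FinMatroid α where
  E := M.E \ S
  Indep I := I ⊆ M.E \ S ∧ M.rank (I ∪ S) = I.card + M.rank S
  indep_subset_ground := fun I h => h.1
  indep_empty := ⟨Finset.empty_subset _, by simp⟩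
  indep_subset := by
    intro I J hJ hIJ
    refine ⟨hIJ.trans hJ.1, le_antisymm ?_ ?_⟩
    · have := M.rank_union_le_card S I
      rw [Finset.union_comm S I] at this
      omega
    · have hsplit : J ∪ S = (I ∪ S) ∪ (J \ I) := by
        ext x
        simp only [Finset.mem_union, Finset.mem_sdiff]
        constructor
        · rintro (hx | hx)
          · by_cases h : x ∈ I
            · tauto
            · tauto
          · tauto
        · rintro ((hx | hx) | hx)
          · exact Or.inl (hIJ hx)
          · tauto
          · tauto
      have h2 := M.rank_union_le_card (I ∪ S) (J \ I)
      rw [← hsplit] at h2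
      have h3 : (J \ I).card = J.card - I.card := Finset.card_sdiff_of_subset hIJ
      have h4 : I.card ≤ J.card := Finset.card_le_card hIJ
      have h5 := hJ.2
      omega
  indep_exchange := by
    intro I J hI hJ hcard
    obtain ⟨B, hBS, hBInd, hBcard⟩ := M.exists_basis S
    have key : ∀ I', I' ⊆ M.E \ S → M.rank (I' ∪ S) = I'.card + M.rank S →
        M.Indep (I' ∪ B) ∧ (I' ∪ B).card = I'.card + B.card := by
      intro I' hI'g hI'r
      obtain ⟨K, hBK, hKsub, hKInd, hKcard⟩ := exists_basis_superset hBInd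
        (hBS.trans Finset.subset_union_right)
      have hKS : K ∩ S = B := by
        refine (Finset.eq_of_subset_of_card_le (Finset.subset_inter hBK hBS) ?_).symm
        have : (K ∩ S).card ≤ M.rank S := le_rank
          (M.indep_subset hKInd Finset.inter_subset_left) Finset.inter_subset_right
        omega
      have hKdiff : K \ S ⊆ I' := by
        intro x hx
        rw [Finset.mem_sdiff] at hx
        rcases Finset.mem_union.1 (hKsub hx.1) with h | h
        · exact h
        · exact absurd h hx.2
      have hKcard2 : (K ∩ S).card + (K \ S).card = K.card := Finset.card_inter_add_card_sdiff K S
      have hKdiffcard : (K \ S).card = I'.card := by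
        rw [hKS] at hKcard2
        omega
      have hKdiffeq : K \ S = I' :=
        Finset.eq_of_subset_of_card_le hKdiff (by omega)
      have hKeq : I' ∪ B = K := by
        rw [← hKdiffeq, ← hKS]
        exact Finset.sdiff_union_inter K S
      have hdisj : Disjoint I' B := by
        refine Finset.disjoint_left.2 fun x hxI hxB => ?_
        have := hI'g hxI
        rw [Finset.mem_sdiff] at this
        exact this.2 (hBS hxB)
      refine ⟨hKeq ▸ hKInd, Finset.card_union_of_disjoint hdisj⟩
    obtain ⟨hIB, hIBcard⟩ := key I hI.1 hI.2
    obtain ⟨hJB, hJBcard⟩ := key J hJ.1 hJ.2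
    obtain ⟨e, he, hins⟩ := M.indep_exchange hIB hJB (by omega)
    rw [Finset.mem_sdiff] at he
    have heJ : e ∈ J := by
      rcases Finset.mem_union.1 he.1 with h | h
      · exact h
      · exact absurd (Finset.mem_union_right I h) he.2
    have heI : e ∉ I := fun h => he.2 (Finset.mem_union_left B h)
    refine ⟨e, Finset.mem_sdiff.2 ⟨heJ, heI⟩, Finset.insert_subset (hJ.1 heJ) hI.1, ?_⟩
    have hins2 : M.Indep ((insert e I) ∪ B) := by
      rwa [Finset.insert_union]
    refine le_antisymm ?_ ?_
    · have := M.rank_union_le_card S (insert e I)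
      rw [Finset.union_comm S _] at this
      omega
    · have hsub : (insert e I) ∪ B ⊆ (insert e I) ∪ S := Finset.union_subset_union_right hBS
      have h1 : ((insert e I) ∪ B).card ≤ M.rank ((insert e I) ∪ S) := le_rank hins2 hsub
      have hdisj : Disjoint (insert e I) B := by
        refine Finset.disjoint_left.2 fun x hxI hxB => ?_
        rcases Finset.mem_insert.1 hxI with h | h
        · subst h
          have := hJ.1 heJ
          rw [Finset.mem_sdiff] at this
          exact this.2 (hBS hxB)
        · have := hI.1 h
          rw [Finset.mem_sdiff] at this
          exact this.2 (hBS hxB)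
      have h2 : ((insert e I) ∪ B).card = (insert e I).card + B.card :=
        Finset.card_union_of_disjoint hdisj
      omega

lemma contract_rank (M : FinMatroid α) (S : Finset α) (hA : A ⊆ M.E \ S) :
    (M.contract S).rank A + M.rank S = M.rank (A ∪ S) := by
  refine le_antisymm ?_ ?_
  · obtain ⟨I, hIA, hIInd, hIcard⟩ := (M.contract S).exists_basis A
    have h1 : M.rank (I ∪ S) = I.card + M.rank S := hIInd.2
    have h2 : M.rank (I ∪ S) ≤ M.rank (A ∪ S) := rank_mono (Finset.union_subset_union_left hIA)
    omega
  · obtain ⟨B, hBS, hBInd, hBcard⟩ := M.exists_basis S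
    obtain ⟨K, hBK, hKsub, hKInd, hKcard⟩ := exists_basis_superset hBInd
      (hBS.trans Finset.subset_union_right)
    have hKS : K ∩ S = B := by
      refine (Finset.eq_of_subset_of_card_le (Finset.subset_inter hBK hBS) ?_).symm
      have : (K ∩ S).card ≤ M.rank S := le_rank
        (M.indep_subset hKInd Finset.inter_subset_left) Finset.inter_subset_right
      omega
    have hKdiff : K \ S ⊆ A := by
      intro x hx
      rw [Finset.mem_sdiff] at hx
      rcases Finset.mem_union.1 (hKsub hx.1) with h | h
      · exact h
      · exact absurd h hx.2
    have hKcard2 : (K ∩ S).card + (K \ S).card = K.card := Finset.card_inter_add_card_sdiff K S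
    have hKSc : (K ∩ S).card = M.rank S := by rw [hKS, hBcard]
    have hle : M.rank ((K \ S) ∪ S) = (K \ S).card + M.rank S := by
      refine le_antisymm ?_ ?_
      · have := M.rank_union_le_card S (K \ S)
        rw [Finset.union_comm S _] at this
        omega
      · have hKsub2 : K ⊆ (K \ S) ∪ S := by
          intro x hx
          by_cases h : x ∈ S
          · exact Finset.mem_union_right _ h
          · exact Finset.mem_union_left _ (Finset.mem_sdiff.2 ⟨hx, h⟩)
        have := le_rank hKInd hKsub2
        omega
    have hCind : (M.contract S).Indep (K \ S) := by
      refine ⟨?_, hle⟩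
      intro x hx
      rw [Finset.mem_sdiff] at hx ⊢
      exact ⟨M.indep_subset_ground hKInd hx.1, hx.2⟩
    have : (K \ S).card ≤ (M.contract S).rank A := le_rank hCind hKdiff
    omega

end FinMatroid

namespace IterRef

variable {α : Type*}

/-- Feasibility of a point for the base polytope of `M₀` and the polytopes of members of `L`. -/
def Feas (M₀ : FinMatroid α) (L : Multiset (FinMatroid α)) (y : α → ℝ) : Prop :=
  (∀ e ∈ M₀.E, 0 ≤ y e) ∧ (∀ A ⊆ M₀.E, ∑ e ∈ A, y e ≤ (M₀.rank A : ℝ)) ∧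
  (∑ e ∈ M₀.E, y e = (M₀.rank M₀.E : ℝ)) ∧
  (∀ Mi ∈ L, ∀ A ⊆ Mi.E, ∑ e ∈ A, y e ≤ (Mi.rank A : ℝ))

/-- Supported on the ground set. -/
def Supp (M₀ : FinMatroid α) (y : α → ℝ) : Prop := ∀ a, a ∉ M₀.E → y a = 0

lemma feas_le_one {M₀ : FinMatroid α} {L : Multiset (FinMatroid α)} {y : α → ℝ}
    (hy : Feas M₀ L y) {e : α} (he : e ∈ M₀.E) : y e ≤ 1 := by
  have h := hy.2.1 {e} (Finset.singleton_subset_iff.2 he)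
  have h2 : M₀.rank {e} ≤ 1 := by simpa using M₀.rank_le_card {e}
  have h3 : (M₀.rank {e} : ℝ) ≤ 1 := by exact_mod_cast h2
  simpa using h.trans h3

lemma exists_opt (M₀ : FinMatroid α) (L : Multiset (FinMatroid α)) (w : α → ℝ)
    (hLE : ∀ Mi ∈ L, Mi.E ⊆ M₀.E) (x : α → ℝ) (hx : Feas M₀ L x) :
    ∃ y : α → ℝ, Feas M₀ L y ∧ Supp M₀ y ∧
      (∑ e ∈ M₀.E, w e * x e ≤ ∑ e ∈ M₀.E, w e * y e) ∧
      (∀ z, Feas M₀ L z → Supp M₀ z →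
        ∑ e ∈ M₀.E, w e * z e ≤ ∑ e ∈ M₀.E, w e * y e) ∧
      (∀ z, Feas M₀ L z → Supp M₀ z →
        (∑ e ∈ M₀.E, w e * z e = ∑ e ∈ M₀.E, w e * y e) →
        ∑ e ∈ M₀.E, z e * z e ≤ ∑ e ∈ M₀.E, y e * y e) := by
  set E := M₀.E with hEdef
  set P : Set (α → ℝ) := {y | Feas M₀ L y ∧ Supp M₀ y} with hPdef
  -- truncation of x is in P
  set x' : α → ℝ := fun a => if a ∈ E then x a else 0 with hx'def
  have htrunc : ∀ A ⊆ E, ∑ e ∈ A, x' e = ∑ e ∈ A, x e := by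
    intro A hA
    refine Finset.sum_congr rfl fun e he => ?_
    simp only [hx'def, if_pos (hA he)]
  have hx'P : x' ∈ P := by
    refine ⟨⟨fun e he => ?_, fun A hA => ?_, ?_, fun Mi hMi A hA => ?_⟩, fun a ha => if_neg ha⟩
    · simp only [hx'def]; split_ifs <;> exact hx.1 e he
    · rw [htrunc A hA]; exact hx.2.1 A hA
    · rw [htrunc E (subset_refl E)]; exact hx.2.2.1
    · rw [htrunc A (hA.trans (hLE Mi hMi))]; exact hx.2.2.2 Mi hMi A hA
  -- P is closed
  have hPclosed : IsClosed P := by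
    have h1 : IsClosed {y : α → ℝ | ∀ e ∈ E, 0 ≤ y e} := by
      have : {y : α → ℝ | ∀ e ∈ E, 0 ≤ y e} = ⋂ (e : α) (_ : e ∈ E), {y | 0 ≤ y e} := by
        ext; simp
      rw [this]
      exact isClosed_iInter fun e => isClosed_iInter fun _ =>
        isClosed_le continuous_const (continuous_apply e)
    have h2 : IsClosed {y : α → ℝ | ∀ A ⊆ E, ∑ e ∈ A, y e ≤ (M₀.rank A : ℝ)} := by
      have : {y : α → ℝ | ∀ A ⊆ E, ∑ e ∈ A, y e ≤ (M₀.rank A : ℝ)} =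
          ⋂ (A : Finset α) (_ : A ⊆ E), {y | ∑ e ∈ A, y e ≤ (M₀.rank A : ℝ)} := by
        ext; simp
      rw [this]
      exact isClosed_iInter fun A => isClosed_iInter fun _ =>
        isClosed_le (continuous_finset_sum A fun e _ => continuous_apply e) continuous_const
    have h3 : IsClosed {y : α → ℝ | ∑ e ∈ E, y e = (M₀.rank E : ℝ)} :=
      isClosed_eq (continuous_finset_sum E fun e _ => continuous_apply e) continuous_const
    have h4 : IsClosed {y : α → ℝ |
        ∀ Mi ∈ L, ∀ A ⊆ Mi.E, ∑ e ∈ A, y e ≤ (Mi.rank A : ℝ)} := by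
      have : {y : α → ℝ | ∀ Mi ∈ L, ∀ A ⊆ Mi.E, ∑ e ∈ A, y e ≤ (Mi.rank A : ℝ)} =
          ⋂ (Mi : FinMatroid α) (_ : Mi ∈ L) (A : Finset α) (_ : A ⊆ Mi.E),
            {y | ∑ e ∈ A, y e ≤ (Mi.rank A : ℝ)} := by
        ext; simp
      rw [this]
      exact isClosed_iInter fun Mi => isClosed_iInter fun _ => isClosed_iInter fun A =>
        isClosed_iInter fun _ =>
          isClosed_le (continuous_finset_sum A fun e _ => continuous_apply e) continuous_const
    have h5 : IsClosed {y : α → ℝ | ∀ a, a ∉ E → y a = 0} := by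
      have : {y : α → ℝ | ∀ a, a ∉ E → y a = 0} =
          ⋂ (a : α) (_ : a ∉ E), {y | y a = 0} := by ext; simp
      rw [this]
      exact isClosed_iInter fun a => isClosed_iInter fun _ =>
        isClosed_eq (continuous_apply a) continuous_const
    have hPeq : P = {y : α → ℝ | ∀ e ∈ E, 0 ≤ y e} ∩
        ({y : α → ℝ | ∀ A ⊆ E, ∑ e ∈ A, y e ≤ (M₀.rank A : ℝ)} ∩
        ({y : α → ℝ | ∑ e ∈ E, y e = (M₀.rank E : ℝ)} ∩
        ({y : α → ℝ | ∀ Mi ∈ L, ∀ A ⊆ Mi.E, ∑ e ∈ A, y e ≤ (Mi.rank A : ℝ)} ∩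
          {y : α → ℝ | ∀ a, a ∉ E → y a = 0}))) := by
      ext y
      simp only [hPdef, Set.mem_setOf_eq, Set.mem_inter_iff]
      constructor
      · rintro ⟨⟨a, b, c, d⟩, s⟩; exact ⟨a, b, c, d, s⟩
      · rintro ⟨a, b, c, d, s⟩; exact ⟨⟨a, b, c, d⟩, s⟩
    rw [hPeq]
    exact h1.inter (h2.inter (h3.inter (h4.inter h5)))
  -- P is compact
  have hPcomp : IsCompact P := by
    have hbox : IsCompact (Set.univ.pi fun a : α =>
        if a ∈ E then Set.Icc (0:ℝ) 1 else ({0} : Set ℝ)) := by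
      refine isCompact_univ_pi fun a => ?_
      by_cases h : a ∈ E
      · simp only [if_pos h]; exact isCompact_Icc
      · simp only [if_neg h]; exact isCompact_singleton
    refine hbox.of_isClosed_subset hPclosed ?_
    intro y hy
    rw [Set.mem_pi]
    intro a _
    by_cases h : a ∈ E
    · simp only [if_pos h, Set.mem_Icc]
      exact ⟨hy.1.1 a h, feas_le_one hy.1 h⟩
    · simp only [if_neg h, Set.mem_singleton_iff]
      exact hy.2 a h
  -- maximize the linear objective
  set f : (α → ℝ) → ℝ := fun y => ∑ e ∈ E, w e * y e with hfdef
  have hfc : Continuous f := continuous_finset_sum E fun e _ =>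
    continuous_const.mul (continuous_apply e)
  obtain ⟨y₁, hy₁P, hy₁max⟩ := hPcomp.exists_isMaxOn ⟨x', hx'P⟩ hfc.continuousOn
  -- maximize the quadratic objective on the optimal face
  set P' : Set (α → ℝ) := P ∩ {y | f y = f y₁} with hP'def
  have hP'comp : IsCompact P' := hPcomp.inter_right (isClosed_eq hfc continuous_const)
  set g : (α → ℝ) → ℝ := fun y => ∑ e ∈ E, y e * y e with hgdef
  have hgc : Continuous g := continuous_finset_sum E fun e _ =>
    (continuous_apply e).mul (continuous_apply e)
  obtain ⟨y₂, hy₂P', hy₂max⟩ := hP'comp.exists_isMaxOn ⟨y₁, hy₁P, rfl⟩ hgc.continuousOn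
  have hy₂P : y₂ ∈ P := hy₂P'.1
  have hfy₂ : f y₂ = f y₁ := hy₂P'.2
  refine ⟨y₂, hy₂P.1, hy₂P.2, ?_, ?_, ?_⟩
  · have h1 : f x' ≤ f y₁ := isMaxOn_iff.1 hy₁max x' hx'P
    have h2 : f x' = ∑ e ∈ E, w e * x e := by
      refine Finset.sum_congr rfl fun e he => ?_
      simp only [hx'def, if_pos he]
    show (∑ e ∈ E, w e * x e) ≤ f y₂
    rw [hfy₂]
    calc ∑ e ∈ E, w e * x e = f x' := h2.symm
      _ ≤ f y₁ := h1
  · intro z hz hzs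
    have : f z ≤ f y₁ := isMaxOn_iff.1 hy₁max z (⟨hz, hzs⟩ : z ∈ P)
    show f z ≤ f y₂
    rw [hfy₂]; exact this
  · intro z hz hzs hfz
    have hzP' : z ∈ P' := ⟨⟨hz, hzs⟩, show f z = f y₁ from
      (by simpa [hfdef] using hfz : f z = f y₂).trans hfy₂⟩
    show g z ≤ g y₂
    exact isMaxOn_iff.1 hy₂max z hzP'

lemma exists_partition (M₀ : FinMatroid α) (x : α → ℝ)
    (hxfeas : ∀ A ⊆ M₀.E, ∑ e ∈ A, x e ≤ (M₀.rank A : ℝ))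
    (hbase : ∑ e ∈ M₀.E, x e = (M₀.rank M₀.E : ℝ))
    (hpos : ∀ e ∈ M₀.E, 0 < x e) :
    ∃ CL : Finset (Finset α), (∀ C ∈ CL, C ⊆ M₀.E) ∧
      ((CL.card : ℝ) ≤ ∑ e ∈ M₀.E, x e) ∧
      (∀ S, S ⊆ M₀.E → ∑ e ∈ S, x e = (M₀.rank S : ℝ) → ∀ a : α,
        (if a ∈ S then (1:ℝ) else 0) =
          ∑ C ∈ CL.filter (fun C => C ⊆ S), (if a ∈ C then (1:ℝ) else 0)) := by
  set E := M₀.E with hEdef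
  set 𝒯 : Finset (Finset α) :=
    E.powerset.filter (fun S => ∑ e ∈ S, x e = (M₀.rank S : ℝ)) with h𝒯def
  have hmem𝒯 : ∀ S, S ∈ 𝒯 ↔ (S ⊆ E ∧ ∑ e ∈ S, x e = (M₀.rank S : ℝ)) := by
    intro S; simp [h𝒯def, Finset.mem_filter, Finset.mem_powerset]
  have hE𝒯 : E ∈ 𝒯 := (hmem𝒯 E).2 ⟨subset_refl E, hbase⟩
  have hemp𝒯 : ∅ ∈ 𝒯 := (hmem𝒯 ∅).2 ⟨Finset.empty_subset E, by simp [M₀.rank_empty]⟩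
  -- closure under union and intersection
  have hcl : ∀ S ∈ 𝒯, ∀ T ∈ 𝒯, S ∪ T ∈ 𝒯 ∧ S ∩ T ∈ 𝒯 := by
    intro S hS T hT
    obtain ⟨hSE, hSt⟩ := (hmem𝒯 S).1 hS
    obtain ⟨hTE, hTt⟩ := (hmem𝒯 T).1 hT
    have hUE : S ∪ T ⊆ E := Finset.union_subset hSE hTE
    have hIE : S ∩ T ⊆ E := Finset.inter_subset_left.trans hSE
    have hsum : ∑ e ∈ S ∪ T, x e + ∑ e ∈ S ∩ T, x e = ∑ e ∈ S, x e + ∑ e ∈ T, x e :=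
      Finset.sum_union_inter
    have hsub : (M₀.rank (S ∪ T) : ℝ) + (M₀.rank (S ∩ T) : ℝ) ≤
        (M₀.rank S : ℝ) + (M₀.rank T : ℝ) := by
      exact_mod_cast M₀.submodular S T
    have hU := hxfeas (S ∪ T) hUE
    have hI := hxfeas (S ∩ T) hIE
    exact ⟨(hmem𝒯 _).2 ⟨hUE, by linarith⟩, (hmem𝒯 _).2 ⟨hIE, by linarith⟩⟩
  -- minimal tight set containing e
  have hinf : ∀ (F : Finset (Finset α)) (hne : F.Nonempty),
      (∀ S ∈ F, S ∈ 𝒯) → F.inf' hne id ∈ 𝒯 := by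
    intro F hne
    induction hne using Finset.Nonempty.cons_induction with
    | singleton a => intro h; simpa using h a (by simp)
    | cons a s ha hs ih =>
      intro h
      rw [Finset.inf'_cons]
      exact (hcl _ (h a (Finset.mem_cons_self a s)) _
        (ih (fun S hS => h S (Finset.mem_cons_of_mem hS)))).2
  set Se : α → Finset α := fun e =>
    if he : e ∈ E then
      (𝒯.filter (fun S => e ∈ S)).inf'
        ⟨E, Finset.mem_filter.2 ⟨hE𝒯, he⟩⟩ id
    else ∅ with hSedef
  have hSe𝒯 : ∀ e ∈ E, Se e ∈ 𝒯 := by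
    intro e he
    rw [hSedef]
    simp only [dif_pos he]
    exact hinf _ _ (fun S hS => (Finset.mem_filter.1 hS).1)
  have hSemem : ∀ e ∈ E, e ∈ Se e := by
    intro e he
    rw [hSedef]; simp only [dif_pos he]
    have : ({e} : Finset α) ≤ (𝒯.filter (fun S => e ∈ S)).inf'
        ⟨E, Finset.mem_filter.2 ⟨hE𝒯, he⟩⟩ id :=
      Finset.le_inf' _ _ (fun S hS => Finset.singleton_subset_iff.2 (Finset.mem_filter.1 hS).2)
    exact Finset.singleton_subset_iff.1 this
  have hSemin : ∀ e ∈ E, ∀ S ∈ 𝒯, e ∈ S → Se e ⊆ S := by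
    intro e he S hS heS
    rw [hSedef]; simp only [dif_pos he]
    exact Finset.inf'_le id (Finset.mem_filter.2 ⟨hS, heS⟩)
  -- union of tight sets avoiding e
  set Ue : α → Finset α := fun e => (𝒯.filter (fun S => e ∉ S)).sup id with hUedef
  have hUe𝒯 : ∀ e, Ue e ∈ 𝒯 := by
    intro e
    rw [hUedef]
    exact Finset.sup_induction hemp𝒯 (fun a pa b pb => (hcl a pa b pb).1)
      (fun S hS => (Finset.mem_filter.1 hS).1)
  have hUenot : ∀ e, e ∉ Ue e := by
    intro e he
    rw [hUedef] at he
    obtain ⟨S, hS, heS⟩ := Finset.mem_sup.1 he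
    exact (Finset.mem_filter.1 hS).2 heS
  have hUemax : ∀ e, ∀ S ∈ 𝒯, e ∉ S → S ⊆ Ue e := by
    intro e S hS heS
    rw [hUedef]
    exact Finset.le_sup (f := id) (Finset.mem_filter.2 ⟨hS, heS⟩)
  -- classes
  set cls : α → Finset α := fun e => Se e \ Ue e with hclsdef
  have hclsmem : ∀ e ∈ E, e ∈ cls e := by
    intro e he
    rw [hclsdef]
    exact Finset.mem_sdiff.2 ⟨hSemem e he, hUenot e⟩
  have hclsE : ∀ e ∈ E, cls e ⊆ E := by
    intro e he
    have := ((hmem𝒯 _).1 (hSe𝒯 e he)).1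
    exact (Finset.sdiff_subset).trans this
  have hSeeq : ∀ e ∈ E, ∀ g, g ∈ cls e → Se g = Se e ∧ cls g = cls e := by
    intro e he g hg
    have hgSe : g ∈ Se e := (Finset.mem_sdiff.1 hg).1
    have hgUe : g ∉ Ue e := (Finset.mem_sdiff.1 hg).2
    have hgE : g ∈ E := hclsE e he hg
    have h1 : Se g ⊆ Se e := hSemin g hgE (Se e) (hSe𝒯 e he) hgSe
    have heSg : e ∈ Se g := by
      by_contra hc
      exact hgUe (hUemax e (Se g) (hSe𝒯 g hgE) hc (hSemem g hgE))
    have h2 : Se e ⊆ Se g := hSemin e he (Se g) (hSe𝒯 g hgE) heSg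
    have hSeq : Se g = Se e := le_antisymm h1 h2
    have hiff : ∀ S ∈ 𝒯, (e ∈ S ↔ g ∈ S) := by
      intro S hS
      constructor
      · intro heS'
        exact hSemin e he S hS heS' hgSe
      · intro hgS
        exact hSemin g hgE S hS hgS heSg
    have hUeq : Ue g = Ue e := by
      show (𝒯.filter (fun S => g ∉ S)).sup id = (𝒯.filter (fun S => e ∉ S)).sup id
      congr 1
      apply Finset.ext
      intro S
      simp only [Finset.mem_filter]
      constructor
      · rintro ⟨hS, hgS⟩
        exact ⟨hS, fun heS' => hgS ((hiff S hS).1 heS')⟩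
      · rintro ⟨hS, heS'⟩
        exact ⟨hS, fun hgS => heS' ((hiff S hS).2 hgS)⟩
    refine ⟨hSeq, ?_⟩
    show Se g \ Ue g = Se e \ Ue e
    rw [hSeq, hUeq]
  set CL : Finset (Finset α) := E.image cls with hCLdef
  have hCLmem : ∀ C ∈ CL, ∃ e ∈ E, cls e = C := by
    intro C hC
    simpa [hCLdef] using hC
  have hCLE : ∀ C ∈ CL, C ⊆ E := by
    intro C hC
    obtain ⟨e, he, rfl⟩ := hCLmem C hC
    exact hclsE e he
  -- mass of each class is at least 1
  have hmass : ∀ e ∈ E, 1 ≤ ∑ a ∈ cls e, x a := by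
    intro e he
    have h1 : cls e = Se e \ (Se e ∩ Ue e) := by
      rw [hclsdef, Finset.sdiff_inter_self_left]
    have h2 : ∑ a ∈ cls e, x a = ∑ a ∈ Se e, x a - ∑ a ∈ Se e ∩ Ue e, x a := by
      rw [h1]
      exact Finset.sum_sdiff_eq_sub Finset.inter_subset_left
    have hSt : ∑ a ∈ Se e, x a = (M₀.rank (Se e) : ℝ) := ((hmem𝒯 _).1 (hSe𝒯 e he)).2
    have hI𝒯 : Se e ∩ Ue e ∈ 𝒯 := (hcl _ (hSe𝒯 e he) _ (hUe𝒯 e)).2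
    have hIt : ∑ a ∈ Se e ∩ Ue e, x a = (M₀.rank (Se e ∩ Ue e) : ℝ) := ((hmem𝒯 _).1 hI𝒯).2
    have hposs : 0 < ∑ a ∈ cls e, x a :=
      Finset.sum_pos (fun a ha => hpos a (hclsE e he ha)) ⟨e, hclsmem e he⟩
    rw [h2, hSt, hIt] at hposs ⊢
    have hlt : M₀.rank (Se e ∩ Ue e) < M₀.rank (Se e) := by
      by_contra hc
      push_neg at hc
      have : (M₀.rank (Se e) : ℝ) ≤ (M₀.rank (Se e ∩ Ue e) : ℝ) := by exact_mod_cast hc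
      linarith
    have : (M₀.rank (Se e ∩ Ue e) : ℝ) + 1 ≤ (M₀.rank (Se e) : ℝ) := by exact_mod_cast hlt
    linarith
  -- CL is a partition of E
  have hdisj : ∀ e₁ ∈ E, ∀ e₂ ∈ E, cls e₁ ≠ cls e₂ → Disjoint (cls e₁) (cls e₂) := by
    intro e₁ h₁ e₂ h₂ hne
    refine Finset.disjoint_left.2 fun g hg₁ hg₂ => hne ?_
    rw [← (hSeeq e₁ h₁ g hg₁).2, ← (hSeeq e₂ h₂ g hg₂).2]
  have hcover : CL.biUnion id = E := by
    ext a
    simp only [Finset.mem_biUnion, id]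
    constructor
    · rintro ⟨C, hC, haC⟩
      exact hCLE C hC haC
    · intro ha
      exact ⟨cls a, Finset.mem_image_of_mem cls ha, hclsmem a ha⟩
  have hpd : (↑CL : Set (Finset α)).PairwiseDisjoint id := by
    intro C₁ h₁ C₂ h₂ hne
    obtain ⟨e₁, he₁, rfl⟩ := hCLmem C₁ h₁
    obtain ⟨e₂, he₂, rfl⟩ := hCLmem C₂ h₂
    exact hdisj e₁ he₁ e₂ he₂ hne
  have hcount : (CL.card : ℝ) ≤ ∑ e ∈ E, x e := by
    have h1 : ∑ e ∈ E, x e = ∑ C ∈ CL, ∑ a ∈ C, x a := by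
      rw [← hcover]
      exact Finset.sum_biUnion hpd
    rw [h1, Finset.cast_card]
    refine Finset.sum_le_sum fun C hC => ?_
    obtain ⟨e, he, rfl⟩ := hCLmem C hC
    exact hmass e he
  refine ⟨CL, hCLE, hcount, ?_⟩
  -- every tight set is the disjoint union of the classes inside it
  intro S hSE hSt a
  have hS𝒯 : S ∈ 𝒯 := (hmem𝒯 S).2 ⟨hSE, hSt⟩
  by_cases haS : a ∈ S
  · have haE : a ∈ E := hSE haS
    have hclaS : cls a ⊆ S :=
      (Finset.sdiff_subset).trans (hSemin a haE S hS𝒯 haS)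
    rw [if_pos haS]
    have hmemf : cls a ∈ CL.filter (fun C => C ⊆ S) :=
      Finset.mem_filter.2 ⟨Finset.mem_image_of_mem cls haE, hclaS⟩
    rw [Finset.sum_eq_single_of_mem (cls a) hmemf]
    · rw [if_pos (hclsmem a haE)]
    · intro b hb hbne
      rw [if_neg]
      intro hab
      obtain ⟨g, hgE, rfl⟩ := hCLmem b (Finset.mem_filter.1 hb).1
      exact hbne ((hSeeq g hgE a hab).2).symm
  · rw [if_neg haS]
    refine (Finset.sum_eq_zero fun b hb => ?_).symm
    rw [if_neg]
    intro hab
    exact haS ((Finset.mem_filter.1 hb).2 hab)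

lemma multiset_swap (E : Finset α) (K : Multiset (FinMatroid α)) (f : α → ℝ) :
    (∀ Mi ∈ K, Mi.E ⊆ E) →
    (K.map (fun Mi => ∑ e ∈ Mi.E, f e)).sum
      = ∑ e ∈ E, ((K.map (fun Mi => if e ∈ Mi.E then (1:ℝ) else 0)).sum) * f e := by
  induction K using Multiset.induction_on with
  | empty => simp
  | cons Mi K ih =>
    intro hK
    have hMiE : Mi.E ⊆ E := hK Mi (Multiset.mem_cons_self _ _)
    have ih' := ih (fun M h => hK M (Multiset.mem_cons_of_mem h))
    simp only [Multiset.map_cons, Multiset.sum_cons, ih']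
    have h1 : ∑ e ∈ Mi.E, f e = ∑ e ∈ E, (if e ∈ Mi.E then f e else 0) := by
      rw [Finset.sum_ite_mem, Finset.inter_eq_right.2 hMiE]
    rw [h1, ← Finset.sum_add_distrib]
    refine Finset.sum_congr rfl fun e he => ?_
    by_cases h : e ∈ Mi.E <;> simp [h] <;> ring

lemma exists_eps {β : Type*} (s : Finset β) (f : β → ℝ) (hf : ∀ b ∈ s, 0 < f b) :
    ∃ ε : ℝ, 0 < ε ∧ ε ≤ 1 ∧ ∀ b ∈ s, ε ≤ f b := by
  have hne : (insert (1:ℝ) (s.image f)).Nonempty := ⟨1, Finset.mem_insert_self 1 _⟩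
  refine ⟨(insert (1:ℝ) (s.image f)).min' hne, ?_,
    Finset.min'_le _ 1 (Finset.mem_insert_self 1 _), ?_⟩
  · have hmem := (insert (1:ℝ) (s.image f)).min'_mem hne
    rcases Finset.mem_insert.1 hmem with h | h
    · rw [h]; norm_num
    · obtain ⟨b, hb, hfb⟩ := Finset.mem_image.1 h
      rw [← hfb]; exact hf b hb
  · intro b hb
    exact Finset.min'_le _ (f b) (Finset.mem_insert_of_mem (Finset.mem_image_of_mem f hb))

lemma exists_direction (Δ : ℕ) (hΔ1 : 1 ≤ Δ)
    (M₀ : FinMatroid α) (L : Multiset (FinMatroid α))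
    (hLE : ∀ Mi ∈ L, Mi.E ⊆ M₀.E)
    (hdeg : ∀ e ∈ M₀.E, ((L.map (fun Mi => if e ∈ Mi.E then (1:ℝ) else 0)).sum) ≤ (Δ:ℝ))
    (hne : M₀.E.Nonempty)
    (x : α → ℝ)
    (hxfeas : ∀ A ⊆ M₀.E, ∑ e ∈ A, x e ≤ (M₀.rank A : ℝ))
    (hbase : ∑ e ∈ M₀.E, x e = (M₀.rank M₀.E : ℝ))
    (hxi : ∀ Mi ∈ L, ∀ A ⊆ Mi.E, ∑ e ∈ A, x e ≤ (Mi.rank A : ℝ))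
    (hfrac : ∀ e ∈ M₀.E, 0 < x e ∧ x e < 1)
    (hnosparse : ∀ Mi ∈ L, ∃ T, T ⊆ Mi.E ∧ Δ * Mi.rank T < T.card) :
    ∃ D : α → ℝ, (∃ e ∈ M₀.E, D e ≠ 0) ∧ (∀ a, a ∉ M₀.E → D a = 0) ∧
      (∀ S, S ⊆ M₀.E → ∑ e ∈ S, x e = (M₀.rank S : ℝ) → ∑ e ∈ S, D e = 0) ∧
      (∀ Mi ∈ L, (∑ e ∈ Mi.E, x e = (Mi.rank Mi.E : ℝ)) → ∑ e ∈ Mi.E, D e = 0) := by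
  obtain ⟨CL, hCLE, hcount, hdecomp⟩ :=
    exists_partition M₀ x hxfeas hbase (fun e he => (hfrac e he).1)
  set E := M₀.E with hEdef
  -- tight inner matroids
  set K' : Multiset (FinMatroid α) :=
    L.filter (fun Mi => ∑ e ∈ Mi.E, x e = (Mi.rank Mi.E : ℝ)) with hK'def
  have hK'sub : ∀ Mi ∈ K', Mi ∈ L := fun Mi h => Multiset.mem_of_le (Multiset.filter_le _ L) h
  have hK'mem : ∀ Mi ∈ L, (∑ e ∈ Mi.E, x e = (Mi.rank Mi.E : ℝ)) → Mi ∈ K' := by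
    intro Mi hMi ht
    rw [hK'def, Multiset.mem_filter]
    exact ⟨hMi, ht⟩
  -- slack function
  set σ : α → ℝ := fun e => 1 - x e with hσdef
  have hσpos : ∀ e ∈ E, 0 < σ e := fun e he => by
    simp only [hσdef]; linarith [(hfrac e he).2]
  have hσnn : ∀ e ∈ E, 0 ≤ σ e := fun e he => le_of_lt (hσpos e he)
  set degK : α → ℝ := fun e => (K'.map (fun Mi => if e ∈ Mi.E then (1:ℝ) else 0)).sum
    with hdegKdef
  have hdegK_le : ∀ e ∈ E, degK e ≤ (Δ:ℝ) := by
    intro e he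
    obtain ⟨u, hu⟩ := Multiset.le_iff_exists_add.1 (Multiset.filter_le
      (fun Mi => ∑ e ∈ Mi.E, x e = (Mi.rank Mi.E : ℝ)) L)
    have h1 : (L.map (fun Mi => if e ∈ Mi.E then (1:ℝ) else 0)).sum
        = degK e + (u.map (fun Mi => if e ∈ Mi.E then (1:ℝ) else 0)).sum := by
      rw [hdegKdef]
      conv_lhs => rw [hu]
      rw [Multiset.map_add, Multiset.sum_add]
    have h2 : 0 ≤ (u.map (fun Mi => if e ∈ Mi.E then (1:ℝ) else 0)).sum := by
      refine Multiset.sum_nonneg fun v hv => ?_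
      obtain ⟨Mi, _, rfl⟩ := Multiset.mem_map.1 hv
      split_ifs <;> norm_num
    have h3 := hdeg e he
    linarith
  have hswap : (K'.map (fun Mi => ∑ e ∈ Mi.E, σ e)).sum = ∑ e ∈ E, degK e * σ e :=
    multiset_swap E K' σ (fun Mi h => hLE Mi (hK'sub Mi h))
  have hσN : ∀ Mi ∈ L, (Δ:ℝ) ≤ ∑ e ∈ Mi.E, σ e := by
    intro Mi hMi
    obtain ⟨T, hTE, hTcard⟩ := hnosparse Mi hMi
    have htpos : 1 ≤ Mi.rank T := by
      by_contra hc
      push_neg at hc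
      have ht0 : Mi.rank T = 0 := by omega
      have hTne : T.Nonempty := by
        rw [← Finset.card_pos]
        omega
      obtain ⟨e, heT⟩ := hTne
      have h1 := hxi Mi hMi {e} (Finset.singleton_subset_iff.2 (hTE heT))
      have h2 : Mi.rank {e} ≤ Mi.rank T := FinMatroid.rank_mono (Finset.singleton_subset_iff.2 heT)
      have h3 : (Mi.rank {e} : ℝ) ≤ 0 := by
        have : Mi.rank {e} = 0 := by omega
        simp [this]
      have h4 := (hfrac e (hLE Mi hMi (hTE heT))).1
      simp only [Finset.sum_singleton] at h1
      linarith
    have hxT := hxi Mi hMi T hTE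
    have hTc : (Δ:ℝ) * (Mi.rank T : ℝ) + 1 ≤ (T.card : ℝ) := by
      have : Δ * Mi.rank T + 1 ≤ T.card := hTcard
      exact_mod_cast this
    have hσT : ∑ e ∈ T, σ e = (T.card : ℝ) - ∑ e ∈ T, x e := by
      simp only [hσdef]
      rw [Finset.sum_sub_distrib]
      congr 1
      simp
    have h5 : (Δ:ℝ) ≤ ∑ e ∈ T, σ e := by
      rw [hσT]
      have ht1 : (1:ℝ) ≤ (Mi.rank T : ℝ) := by exact_mod_cast htpos
      have hΔ1' : (1:ℝ) ≤ (Δ:ℝ) := by exact_mod_cast hΔ1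
      nlinarith
    refine h5.trans (Finset.sum_le_sum_of_subset_of_nonneg hTE ?_)
    intro e heMi _
    exact hσnn e (hLE Mi hMi heMi)
  have hKcard : (Multiset.card K' : ℝ) * (Δ:ℝ) ≤ ∑ e ∈ E, degK e * σ e := by
    rw [← hswap]
    have h1 : Multiset.card (K'.map (fun Mi => ∑ e ∈ Mi.E, σ e)) • (Δ:ℝ) ≤
        (K'.map (fun Mi => ∑ e ∈ Mi.E, σ e)).sum := by
      refine Multiset.card_nsmul_le_sum fun v hv => ?_
      obtain ⟨Mi, hMi, rfl⟩ := Multiset.mem_map.1 hv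
      exact hσN Mi (hK'sub Mi hMi)
    rw [Multiset.card_map, nsmul_eq_mul] at h1
    exact_mod_cast h1
  have hsum1 : (∑ e ∈ E, x e) + (∑ e ∈ E, σ e) = (E.card : ℝ) := by
    have h0 : ∀ e ∈ E, x e + σ e = 1 := by
      intro e he; simp only [hσdef]; ring
    calc (∑ e ∈ E, x e) + (∑ e ∈ E, σ e) = ∑ e ∈ E, (x e + σ e) :=
          (Finset.sum_add_distrib).symm
      _ = ∑ _e ∈ E, (1:ℝ) := Finset.sum_congr rfl h0
      _ = (E.card : ℝ) := by simp
  -- the euclidean space on the ground set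
  set vec : Finset α → EuclideanSpace ℝ {a : α // a ∈ E} :=
    fun S => WithLp.toLp 2 (fun i => if (i:α) ∈ S then (1:ℝ) else 0) with hvecdef
  have hvecdecomp : ∀ S, S ⊆ E → (∑ e ∈ S, x e = (M₀.rank S : ℝ)) →
      vec S = ∑ C ∈ CL.filter (fun C => C ⊆ S), vec C := by
    intro S hS ht
    ext i
    rw [WithLp.ofLp_sum, Finset.sum_apply]
    exact hdecomp S hS ht (i : α)
  have hvecCL : ∀ S, S ⊆ E → (∑ e ∈ S, x e = (M₀.rank S : ℝ)) →
      vec S ∈ Submodule.span ℝ (↑(CL.image vec) : Set (EuclideanSpace ℝ {a : α // a ∈ E})) := by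
    intro S hS ht
    rw [hvecdecomp S hS ht]
    refine Submodule.sum_mem _ fun C hC => ?_
    exact Submodule.subset_span (by
      simp only [Finset.coe_image, Set.mem_image, Finset.mem_coe]
      exact ⟨C, (Finset.mem_filter.1 hC).1, rfl⟩)
  have hsumapply : ∀ (m : Multiset (FinMatroid α)) (i : {a : α // a ∈ E}),
      ((m.map (fun Mi => vec Mi.E)).sum) i
        = (m.map (fun Mi => if (i:α) ∈ Mi.E then (1:ℝ) else 0)).sum := by
    intro m
    induction m using Multiset.induction_on with
    | empty => intro i; simp [hvecdef]
    | cons Mi K ih =>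
      intro i
      simp only [Multiset.map_cons, Multiset.sum_cons]
      rw [PiLp.add_apply, ih i]
  -- a small spanning family for all tight vectors
  obtain ⟨gens, hgcard, hgt0, hgtMi⟩ :
      ∃ gens : Finset (EuclideanSpace ℝ {a : α // a ∈ E}),
        gens.card < E.card ∧
        (∀ S, S ⊆ E → (∑ e ∈ S, x e = (M₀.rank S : ℝ)) →
          vec S ∈ Submodule.span ℝ (↑gens : Set _)) ∧
        (∀ Mi ∈ L, (∑ e ∈ Mi.E, x e = (Mi.rank Mi.E : ℝ)) →
          vec Mi.E ∈ Submodule.span ℝ (↑gens : Set _)) := by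
    by_cases hβ : ∀ e ∈ E, degK e = (Δ:ℝ)
    · -- uniform full coverage : drop one tight matroid
      have hK'ne : K' ≠ 0 := by
        intro h0
        obtain ⟨e, he⟩ := hne
        have := hβ e he
        rw [hdegKdef, h0] at this
        simp at this
        have hΔ1' : (1:ℝ) ≤ (Δ:ℝ) := by exact_mod_cast hΔ1
        linarith
      obtain ⟨Mi₀, hMi₀⟩ := Multiset.exists_mem_of_ne_zero hK'ne
      refine ⟨CL.image vec ∪ (K'.erase Mi₀).toFinset.image (fun Mi => vec Mi.E), ?_, ?_, ?_⟩
      · -- cardinality bound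
        have hKle : (Multiset.card K' : ℝ) ≤ ∑ e ∈ E, σ e := by
          have h1 : ∑ e ∈ E, degK e * σ e = (Δ:ℝ) * ∑ e ∈ E, σ e := by
            rw [Finset.mul_sum]
            refine Finset.sum_congr rfl fun e he => ?_
            rw [hβ e he]
          have h2 := hKcard
          rw [h1] at h2
          have hΔpos : (0:ℝ) < (Δ:ℝ) := by exact_mod_cast hΔ1
          nlinarith
        have hcard1 : CL.card + Multiset.card K' ≤ E.card := by
          have : (CL.card : ℝ) + (Multiset.card K' : ℝ) ≤ (E.card : ℝ) := by
            rw [← hsum1]; exact add_le_add hcount hKle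
          exact_mod_cast this
        have hK1 : 1 ≤ Multiset.card K' := by
          rw [Nat.one_le_iff_ne_zero]
          simp [hK'ne]
        have hcard2 : ((K'.erase Mi₀).toFinset.image (fun Mi => vec Mi.E)).card
            ≤ Multiset.card K' - 1 := by
          calc ((K'.erase Mi₀).toFinset.image (fun Mi => vec Mi.E)).card
              ≤ (K'.erase Mi₀).toFinset.card := Finset.card_image_le
            _ ≤ Multiset.card (K'.erase Mi₀) := Multiset.toFinset_card_le _
            _ = Multiset.card K' - 1 := by rw [Multiset.card_erase_of_mem hMi₀]; rfl
        have := Finset.card_union_le (CL.image vec)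
          ((K'.erase Mi₀).toFinset.image (fun Mi => vec Mi.E))
        have hCLc : (CL.image vec).card ≤ CL.card := Finset.card_image_le
        have hEne : 1 ≤ E.card := Finset.card_pos.2 hne
        omega
      · intro S hS ht
        refine Submodule.span_mono ?_ (hvecCL S hS ht)
        exact_mod_cast Finset.subset_union_left
      · intro Mi hMi ht
        have hMiK : Mi ∈ K' := hK'mem Mi hMi ht
        by_cases hMieq : Mi = Mi₀
        · subst hMieq
          -- vec Mi.E = Δ • vec E - sum of the others
          have hid : vec Mi.E = (Δ:ℝ) • vec E - ((K'.erase Mi).map (fun M => vec M.E)).sum := by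
            ext i
            rw [PiLp.sub_apply, PiLp.smul_apply, hsumapply]
            have hcons : K' = Mi ::ₘ K'.erase Mi := (Multiset.cons_erase hMi₀).symm
            have hdegi : degK (i : α) = (Δ:ℝ) := hβ (i : α) i.2
            have hdeg2 : degK (i : α) = (if (i:α) ∈ Mi.E then (1:ℝ) else 0)
                + ((K'.erase Mi).map (fun M => if (i:α) ∈ M.E then (1:ℝ) else 0)).sum := by
              simp only [hdegKdef]
              conv_lhs => rw [hcons]
              rw [Multiset.map_cons, Multiset.sum_cons]
            have hvE : vec E i = 1 := by
              simp only [hvecdef, WithLp.ofLp_toLp]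
              rw [if_pos i.2]
            have hvM : vec Mi.E i = (if (i:α) ∈ Mi.E then (1:ℝ) else 0) := by
              simp only [hvecdef, WithLp.ofLp_toLp]
            rw [hvM, hvE, smul_eq_mul, mul_one]
            rw [hdegi] at hdeg2
            linarith
          rw [hid]
          refine Submodule.sub_mem _ (Submodule.smul_mem _ _ ?_) ?_
          · refine Submodule.span_mono ?_ (hvecCL E (subset_refl E) hbase)
            exact_mod_cast Finset.subset_union_left
          · refine multiset_sum_mem _ fun v hv => ?_
            obtain ⟨M, hM, rfl⟩ := Multiset.mem_map.1 hv
            refine Submodule.subset_span ?_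
            refine Finset.mem_coe.2 (Finset.mem_union_right _ ?_)
            exact Finset.mem_image_of_mem _ (Multiset.mem_toFinset.2 hM)
        · refine Submodule.subset_span ?_
          refine Finset.mem_coe.2 (Finset.mem_union_right _ ?_)
          refine Finset.mem_image_of_mem _ (Multiset.mem_toFinset.2 ?_)
          exact (Multiset.mem_erase_of_ne hMieq).2 hMiK
    · -- some element has slack in coverage by tight matroids : strict counting
      push_neg at hβ
      obtain ⟨e₀, he₀, hne₀⟩ := hβ
      have hlt₀ : degK e₀ < (Δ:ℝ) := lt_of_le_of_ne (hdegK_le e₀ he₀) hne₀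
      refine ⟨CL.image vec ∪ K'.toFinset.image (fun Mi => vec Mi.E), ?_, ?_, ?_⟩
      · have hKlt : (Multiset.card K' : ℝ) < ∑ e ∈ E, σ e := by
          have h1 : ∑ e ∈ E, degK e * σ e < (Δ:ℝ) * ∑ e ∈ E, σ e := by
            rw [Finset.mul_sum]
            refine Finset.sum_lt_sum (fun e he => ?_) ⟨e₀, he₀, ?_⟩
            · exact mul_le_mul_of_nonneg_right (hdegK_le e he) (hσnn e he)
            · exact mul_lt_mul_of_pos_right hlt₀ (hσpos e₀ he₀)
          have h2 := hKcard
          have hΔpos : (0:ℝ) < (Δ:ℝ) := by exact_mod_cast hΔ1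
          nlinarith
        have hcard1 : CL.card + Multiset.card K' < E.card := by
          have : (CL.card : ℝ) + (Multiset.card K' : ℝ) < (E.card : ℝ) := by
            rw [← hsum1]
            exact add_lt_add_of_le_of_lt hcount hKlt
          exact_mod_cast this
        have hcard2 : (K'.toFinset.image (fun Mi => vec Mi.E)).card ≤ Multiset.card K' :=
          le_trans Finset.card_image_le (Multiset.toFinset_card_le _)
        have := Finset.card_union_le (CL.image vec) (K'.toFinset.image (fun Mi => vec Mi.E))
        have hCLc : (CL.image vec).card ≤ CL.card := Finset.card_image_le
        omega
      · intro S hS ht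
        refine Submodule.span_mono ?_ (hvecCL S hS ht)
        exact_mod_cast Finset.subset_union_left
      · intro Mi hMi ht
        refine Submodule.subset_span ?_
        refine Finset.mem_coe.2 (Finset.mem_union_right _ ?_)
        exact Finset.mem_image_of_mem _ (Multiset.mem_toFinset.2 (hK'mem Mi hMi ht))
  -- extract an orthogonal direction
  have hspan_ne : Submodule.span ℝ (↑gens : Set (EuclideanSpace ℝ {a : α // a ∈ E})) ≠ ⊤ := by
    intro htop
    have h1 : Module.finrank ℝ (EuclideanSpace ℝ {a : α // a ∈ E}) = E.card := by
      rw [finrank_euclideanSpace]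
      exact Fintype.card_coe E
    have h2 : Module.finrank ℝ
        (Submodule.span ℝ (↑gens : Set (EuclideanSpace ℝ {a : α // a ∈ E}))) ≤ gens.card :=
      finrank_span_finset_le_card gens
    rw [htop, finrank_top, h1] at h2
    omega
  have hbot : (Submodule.span ℝ (↑gens : Set (EuclideanSpace ℝ {a : α // a ∈ E})))ᗮ ≠ ⊥ :=
    fun h => hspan_ne (Submodule.orthogonal_eq_bot_iff.1 h)
  obtain ⟨d, hdW, hd0⟩ := Submodule.exists_mem_ne_zero_of_ne_bot hbot
  have horth : ∀ u ∈ Submodule.span ℝ (↑gens : Set (EuclideanSpace ℝ {a : α // a ∈ E})),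
      (inner ℝ u d : ℝ) = 0 :=
    (Submodule.mem_orthogonal _ d).1 hdW
  set D : α → ℝ := fun a => if h : a ∈ E then d ⟨a, h⟩ else 0 with hDdef
  have hbridge : ∀ S, S ⊆ E → ∑ e ∈ S, D e = (inner ℝ (vec S) d : ℝ) := by
    intro S hS
    have h1 : (inner ℝ (vec S) d : ℝ) = ∑ i : {a : α // a ∈ E},
        (if (i:α) ∈ S then (1:ℝ) else 0) * d i := by
      rw [PiLp.inner_apply]
      refine Finset.sum_congr rfl fun i _ => ?_
      simp [hvecdef, RCLike.inner_apply]
    have h2 : ∀ i : {a : α // a ∈ E},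
        (if (i:α) ∈ S then (1:ℝ) else 0) * d i = (if (i:α) ∈ S then D (i:α) else 0) := by
      intro i
      by_cases h : (i:α) ∈ S
      · simp only [if_pos h, one_mul, hDdef, dif_pos i.2]
      · simp [h]
    have h3 : ∑ i : {a : α // a ∈ E}, (if (i:α) ∈ S then D (i:α) else 0)
        = ∑ a ∈ E, (if a ∈ S then D a else 0) :=
      Finset.sum_coe_sort E (fun a => if a ∈ S then D a else 0)
    rw [h1, Finset.sum_congr rfl (fun i _ => h2 i), h3, Finset.sum_ite_mem,
      Finset.inter_eq_right.2 hS]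
  refine ⟨D, ?_, ?_, ?_, ?_⟩
  · by_contra hc
    push_neg at hc
    refine hd0 ?_
    ext i
    have h1 : D (i:α) = 0 := hc (i:α) i.2
    rw [hDdef] at h1
    simp only [dif_pos i.2] at h1
    simpa using h1
  · intro a ha
    rw [hDdef]
    simp [ha]
  · intro S hS ht
    rw [hbridge S hS]
    exact horth _ (hgt0 S hS ht)
  · intro Mi hMi ht
    rw [hbridge Mi.E (hLE Mi hMi)]
    exact horth _ (hgtMi Mi hMi ht)

lemma no_stuck (Δ : ℕ) (hΔ1 : 1 ≤ Δ) (w : α → ℝ)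
    (M₀ : FinMatroid α) (L : Multiset (FinMatroid α))
    (hLE : ∀ Mi ∈ L, Mi.E ⊆ M₀.E)
    (hdeg : ∀ e ∈ M₀.E, ((L.map (fun Mi => if e ∈ Mi.E then (1:ℝ) else 0)).sum) ≤ (Δ:ℝ))
    (hne : M₀.E.Nonempty)
    (x : α → ℝ) (hx : Feas M₀ L x) (hxs : Supp M₀ x)
    (hoptw : ∀ z, Feas M₀ L z → Supp M₀ z →
        ∑ e ∈ M₀.E, w e * z e ≤ ∑ e ∈ M₀.E, w e * x e)
    (hopt2 : ∀ z, Feas M₀ L z → Supp M₀ z →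
        (∑ e ∈ M₀.E, w e * z e = ∑ e ∈ M₀.E, w e * x e) →
        ∑ e ∈ M₀.E, z e * z e ≤ ∑ e ∈ M₀.E, x e * x e)
    (hfrac : ∀ e ∈ M₀.E, 0 < x e ∧ x e < 1)
    (hnotight : ∀ Mi ∈ L, ∀ S, S ⊆ Mi.E → S.Nonempty → S ≠ Mi.E →
        ∑ e ∈ S, x e ≠ (Mi.rank S : ℝ))
    (hnosparse : ∀ Mi ∈ L, ∃ T, T ⊆ Mi.E ∧ Δ * Mi.rank T < T.card) : False := by
  obtain ⟨D, ⟨e₁, he₁, hD1⟩, hDsupp, hDt0, hDtMi⟩ :=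
    exists_direction Δ hΔ1 M₀ L hLE hdeg hne x hx.2.1 hx.2.2.1 hx.2.2.2 hfrac hnosparse
  set E := M₀.E with hEdef
  -- εs for the three groups of constraints
  obtain ⟨ε₀, hε₀pos, _, hε₀le⟩ := exists_eps
    (E.powerset.filter (fun A => ∑ e ∈ A, x e ≠ (M₀.rank A : ℝ)))
    (fun A => ((M₀.rank A : ℝ) - ∑ e ∈ A, x e) / (|∑ e ∈ A, D e| + 1))
    (by
      intro A hA
      obtain ⟨hA1, hA2⟩ := Finset.mem_filter.1 hA
      have hsub : A ⊆ E := Finset.mem_powerset.1 hA1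
      have hle := hx.2.1 A hsub
      have hlt : ∑ e ∈ A, x e < (M₀.rank A : ℝ) := lt_of_le_of_ne hle hA2
      have hden : (0:ℝ) < |∑ e ∈ A, D e| + 1 := by positivity
      exact div_pos (by linarith) hden)
  obtain ⟨ε₁, hε₁pos, _, hε₁le⟩ := exists_eps E (fun e => x e / (|D e| + 1))
    (by
      intro e he
      have hden : (0:ℝ) < |D e| + 1 := by positivity
      exact div_pos (hfrac e he).1 hden)
  obtain ⟨ε₂, hε₂pos, _, hε₂le⟩ := exists_eps
    ((L.toFinset.sigma (fun Mi => Mi.E.powerset)).filter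
      (fun p => ∑ e ∈ p.2, x e ≠ (p.1.rank p.2 : ℝ)))
    (fun p => ((p.1.rank p.2 : ℝ) - ∑ e ∈ p.2, x e) / (|∑ e ∈ p.2, D e| + 1))
    (by
      intro p hp
      obtain ⟨hp1, hp2⟩ := Finset.mem_filter.1 hp
      obtain ⟨hpL, hpA⟩ := Finset.mem_sigma.1 hp1
      have hle := hx.2.2.2 p.1 (Multiset.mem_toFinset.1 hpL) p.2 (Finset.mem_powerset.1 hpA)
      have hlt : ∑ e ∈ p.2, x e < (p.1.rank p.2 : ℝ) := lt_of_le_of_ne hle hp2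
      have hden : (0:ℝ) < |∑ e ∈ p.2, D e| + 1 := by positivity
      exact div_pos (by linarith) hden)
  set ε : ℝ := min ε₀ (min ε₁ ε₂) with hεdef
  have hεpos : 0 < ε := lt_min hε₀pos (lt_min hε₁pos hε₂pos)
  -- both perturbations are feasible and supported
  have hfeas : ∀ s : ℝ, |s| = 1 →
      Feas M₀ L (fun a => x a + s * ε * D a) ∧ Supp M₀ (fun a => x a + s * ε * D a) := by
    intro s hs
    have habs : ∀ t : ℝ, s * ε * t ≤ ε * |t| ∧ -(ε * |t|) ≤ s * ε * t := by
      intro t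
      have h1 : |s * ε * t| = ε * |t| := by
        rw [abs_mul, abs_mul, hs, abs_of_pos hεpos]
        ring
      constructor
      · calc s * ε * t ≤ |s * ε * t| := le_abs_self _
          _ = ε * |t| := h1
      · have := neg_abs_le (s * ε * t)
        rw [h1] at this
        linarith
    have hsum : ∀ A : Finset α, ∑ e ∈ A, (x e + s * ε * D e)
        = ∑ e ∈ A, x e + s * ε * ∑ e ∈ A, D e := by
      intro A
      rw [Finset.mul_sum, ← Finset.sum_add_distrib]
    constructor
    · refine ⟨?_, ?_, ?_, ?_⟩
      · intro e he
        show 0 ≤ x e + s * ε * D e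
        have h1 := hε₁le e he
        have hden : (0:ℝ) < |D e| + 1 := by positivity
        have h2 : ε * (|D e| + 1) ≤ x e := by
          have h3 : ε ≤ x e / (|D e| + 1) := le_trans (min_le_right _ _)
            (le_trans (min_le_left _ _) h1)
          rwa [le_div_iff₀ hden] at h3
        have h4 := (habs (D e)).2
        rw [mul_add, mul_one] at h2
        linarith
      · intro A hA
        show ∑ e ∈ A, (x e + s * ε * D e) ≤ (M₀.rank A : ℝ)
        rw [hsum A]
        by_cases ht : ∑ e ∈ A, x e = (M₀.rank A : ℝ)
        · rw [hDt0 A hA ht, ht]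
          simp
        · have hmem : A ∈ E.powerset.filter (fun A => ∑ e ∈ A, x e ≠ (M₀.rank A : ℝ)) :=
            Finset.mem_filter.2 ⟨Finset.mem_powerset.2 hA, ht⟩
          have h1 := hε₀le A hmem
          have hden : (0:ℝ) < |∑ e ∈ A, D e| + 1 := by positivity
          have h2 : ε * (|∑ e ∈ A, D e| + 1) ≤ (M₀.rank A : ℝ) - ∑ e ∈ A, x e := by
            have h3 : ε ≤ ((M₀.rank A : ℝ) - ∑ e ∈ A, x e) / (|∑ e ∈ A, D e| + 1) :=
              le_trans (min_le_left _ _) h1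
            rwa [le_div_iff₀ hden] at h3
          have h4 := (habs (∑ e ∈ A, D e)).1
          rw [mul_add, mul_one] at h2
          linarith
      · show ∑ e ∈ E, (x e + s * ε * D e) = (M₀.rank M₀.E : ℝ)
        rw [hsum E, hDt0 E (subset_refl E) hx.2.2.1, hx.2.2.1]
        simp
      · intro Mi hMi A hA
        show ∑ e ∈ A, (x e + s * ε * D e) ≤ (Mi.rank A : ℝ)
        rw [hsum A]
        by_cases ht : ∑ e ∈ A, x e = (Mi.rank A : ℝ)
        · have hD0 : ∑ e ∈ A, D e = 0 := by
            rcases A.eq_empty_or_nonempty with rfl | hAne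
            · simp
            · by_cases hAE : A = Mi.E
              · subst hAE
                exact hDtMi Mi hMi ht
              · exact absurd ht (hnotight Mi hMi A hA hAne hAE)
          rw [hD0, ht]
          simp
        · have hmem : (⟨Mi, A⟩ : (_ : FinMatroid α) × Finset α) ∈
              (L.toFinset.sigma (fun Mi => Mi.E.powerset)).filter
                (fun p => ∑ e ∈ p.2, x e ≠ (p.1.rank p.2 : ℝ)) := by
            refine Finset.mem_filter.2 ⟨Finset.mem_sigma.2 ⟨Multiset.mem_toFinset.2 hMi,
              Finset.mem_powerset.2 hA⟩, ht⟩
          have h1 := hε₂le ⟨Mi, A⟩ hmem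
          have hden : (0:ℝ) < |∑ e ∈ A, D e| + 1 := by positivity
          have h2 : ε * (|∑ e ∈ A, D e| + 1) ≤ (Mi.rank A : ℝ) - ∑ e ∈ A, x e := by
            have h3 : ε ≤ ((Mi.rank A : ℝ) - ∑ e ∈ A, x e) / (|∑ e ∈ A, D e| + 1) :=
              le_trans (min_le_right _ _) (le_trans (min_le_right _ _) h1)
            rwa [le_div_iff₀ hden] at h3
          have h4 := (habs (∑ e ∈ A, D e)).1
          rw [mul_add, mul_one] at h2
          linarith
    · intro a ha
      show x a + s * ε * D a = 0
      rw [hxs a ha, hDsupp a ha]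
      ring
  -- weight expansion
  have hwexp : ∀ s : ℝ, ∑ e ∈ E, w e * (x e + s * ε * D e)
      = ∑ e ∈ E, w e * x e + s * ε * ∑ e ∈ E, w e * D e := by
    intro s
    rw [Finset.mul_sum, ← Finset.sum_add_distrib]
    refine Finset.sum_congr rfl fun e he => by ring
  obtain ⟨hfp, hsp⟩ := hfeas 1 (by norm_num)
  obtain ⟨hfm, hsm⟩ := hfeas (-1) (by norm_num)
  have hwp : ∑ e ∈ E, w e * (x e + 1 * ε * D e) ≤ ∑ e ∈ E, w e * x e := hoptw _ hfp hsp
  have hwm : ∑ e ∈ E, w e * (x e + (-1) * ε * D e) ≤ ∑ e ∈ E, w e * x e := hoptw _ hfm hsm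
  rw [hwexp 1] at hwp
  rw [hwexp (-1)] at hwm
  have hwD : ∑ e ∈ E, w e * D e = 0 := by
    by_contra hc
    rcases lt_or_gt_of_ne hc with h | h
    · nlinarith
    · nlinarith
  have hweq : ∀ s : ℝ, ∑ e ∈ E, w e * (x e + s * ε * D e) = ∑ e ∈ E, w e * x e := by
    intro s
    rw [hwexp s, hwD]
    ring
  have hgp : ∑ e ∈ E, (x e + 1 * ε * D e) * (x e + 1 * ε * D e) ≤ ∑ e ∈ E, x e * x e :=
    hopt2 _ hfp hsp (hweq 1)
  have hgm : ∑ e ∈ E, (x e + (-1) * ε * D e) * (x e + (-1) * ε * D e) ≤ ∑ e ∈ E, x e * x e :=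
    hopt2 _ hfm hsm (hweq (-1))
  have hexp : ∀ s : ℝ, ∑ e ∈ E, (x e + s * ε * D e) * (x e + s * ε * D e)
      = ∑ e ∈ E, x e * x e + (2 * s * ε) * ∑ e ∈ E, x e * D e
        + (s * ε) * (s * ε) * ∑ e ∈ E, D e * D e := by
    intro s
    rw [Finset.mul_sum, Finset.mul_sum, ← Finset.sum_add_distrib, ← Finset.sum_add_distrib]
    refine Finset.sum_congr rfl fun e he => by ring
  rw [hexp 1] at hgp
  rw [hexp (-1)] at hgm
  have hDD : 0 < ∑ e ∈ E, D e * D e := by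
    refine Finset.sum_pos' (fun e _ => mul_self_nonneg (D e)) ⟨e₁, he₁, ?_⟩
    exact mul_self_pos.2 hD1
  nlinarith [mul_pos (mul_pos hεpos hεpos) hDD]

theorem main_lemma (Δ : ℕ) (hΔ1 : 1 ≤ Δ) (w : α → ℝ) :
    ∀ (μ : ℕ) (M₀ : FinMatroid α) (L : Multiset (FinMatroid α)),
      (∀ Mi ∈ L, Mi.E ⊆ M₀.E) →
      (∀ e ∈ M₀.E, ((L.map (fun Mi => if e ∈ Mi.E then (1:ℝ) else 0)).sum) ≤ (Δ:ℝ)) →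
      (M₀.E.card + ((L.map (fun Mi => 3 ^ Mi.E.card)).sum) = μ) →
      ∀ x : α → ℝ, Feas M₀ L x →
      ∃ R : Finset α, M₀.Indep R ∧ R.card = M₀.rank M₀.E ∧
        (∑ e ∈ M₀.E, w e * x e ≤ ∑ e ∈ R, w e) ∧
        (∀ Mi ∈ L, ∀ T ⊆ R ∩ Mi.E, T.card ≤ Δ * Mi.rank T) := by
  intro μ
  induction μ using Nat.strong_induction_on with
  | _ μ IH =>
  intro M₀ L hLE hdeg hμ x hx
  -- pass to an optimal point
  obtain ⟨y, hy, hys, hxy, hyw, hy2⟩ := exists_opt M₀ L w hLE x hx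
  -- base case : empty ground set
  by_cases hE0 : M₀.E = ∅
  · refine ⟨∅, M₀.indep_empty, ?_, ?_, ?_⟩
    · rw [hE0, M₀.rank_empty, Finset.card_empty]
    · rw [hE0]; simp
    · intro Mi hMi T hT
      have : T = ∅ := Finset.subset_empty.1 (hT.trans (Finset.inter_subset_left.trans
        (by simp)))
      simp [this]
  have hne : M₀.E.Nonempty := Finset.nonempty_of_ne_empty hE0
  -- CASE A : delete a zero coordinate
  by_cases hA : ∃ e ∈ M₀.E, y e = 0
  · obtain ⟨e, heE, hye⟩ := hA
    set M₀' := M₀.restrict (M₀.E.erase e) with hM₀'def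
    set F : FinMatroid α → FinMatroid α :=
      fun Mi => if e ∈ Mi.E then Mi.restrict (Mi.E.erase e) else Mi with hFdef
    have hFE : ∀ Mi : FinMatroid α, (F Mi).E ⊆ Mi.E := by
      intro Mi
      simp only [hFdef]
      by_cases h : e ∈ Mi.E
      · rw [if_pos h]; exact Finset.erase_subset e Mi.E
      · rw [if_neg h]
    have hFEe : ∀ Mi ∈ L, (F Mi).E ⊆ M₀.E.erase e := by
      intro Mi hMi
      simp only [hFdef]
      by_cases h : e ∈ Mi.E
      · rw [if_pos h]; exact Finset.erase_subset_erase e (hLE Mi hMi)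
      · rw [if_neg h]; exact Finset.subset_erase.2 ⟨hLE Mi hMi, h⟩
    have hFrank : ∀ Mi : FinMatroid α, ∀ T ⊆ (F Mi).E, (F Mi).rank T = Mi.rank T := by
      intro Mi T hT
      by_cases h : e ∈ Mi.E
      · have hFeq : F Mi = Mi.restrict (Mi.E.erase e) := by simp only [hFdef]; rw [if_pos h]
        rw [hFeq] at hT ⊢
        exact Mi.restrict_rank hT
      · have hFeq : F Mi = Mi := by simp only [hFdef]; rw [if_neg h]
        rw [hFeq]
    have hLE' : ∀ Mi' ∈ L.map F, Mi'.E ⊆ M₀'.E := by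
      intro Mi' hMi'
      obtain ⟨Mi, hMi, rfl⟩ := Multiset.mem_map.1 hMi'
      exact hFEe Mi hMi
    have hdeg' : ∀ e' ∈ M₀'.E,
        (((L.map F).map (fun Mi => if e' ∈ Mi.E then (1:ℝ) else 0)).sum) ≤ (Δ:ℝ) := by
      intro e' he'
      have he'E : e' ∈ M₀.E := Finset.mem_of_mem_erase he'
      rw [Multiset.map_map]
      refine le_trans (Multiset.sum_map_le_sum_map _ _ fun Mi _ => ?_) (hdeg e' he'E)
      show (if e' ∈ (F Mi).E then (1:ℝ) else 0) ≤ (if e' ∈ Mi.E then (1:ℝ) else 0)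
      by_cases h : e' ∈ (F Mi).E
      · rw [if_pos h, if_pos (hFE Mi h)]
      · rw [if_neg h]; split_ifs <;> norm_num
    have hμ' : M₀'.E.card + ((L.map F).map (fun Mi => 3 ^ Mi.E.card)).sum < μ := by
      have hμ1 : M₀'.E.card < M₀.E.card := by
        show (M₀.E.erase e).card < M₀.E.card
        exact Finset.card_erase_lt_of_mem heE
      have hμ2 : ((L.map F).map (fun Mi => 3 ^ Mi.E.card)).sum
          ≤ (L.map (fun Mi => 3 ^ Mi.E.card)).sum := by
        rw [Multiset.map_map]
        refine Multiset.sum_map_le_sum_map _ _ fun Mi _ => ?_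
        show 3 ^ (F Mi).E.card ≤ 3 ^ Mi.E.card
        exact Nat.pow_le_pow_right (by norm_num) (Finset.card_le_card (hFE Mi))
      omega
    have hsums : ∑ e' ∈ M₀.E.erase e, y e' = ∑ e' ∈ M₀.E, y e' :=
      Finset.sum_erase _ hye
    have hrE : M₀.rank (M₀.E.erase e) = M₀.rank M₀.E := by
      refine le_antisymm (M₀.rank_mono (Finset.erase_subset e M₀.E)) ?_
      have h1 : (M₀.rank M₀.E : ℝ) ≤ (M₀.rank (M₀.E.erase e) : ℝ) := by
        rw [← hy.2.2.1, ← hsums]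
        exact hy.2.1 _ (Finset.erase_subset e M₀.E)
      exact_mod_cast h1
    have hrE' : M₀'.rank M₀'.E = M₀.rank M₀.E := by
      show (M₀.restrict (M₀.E.erase e)).rank (M₀.E.erase e) = M₀.rank M₀.E
      rw [M₀.restrict_rank (subset_refl _), hrE]
    have hy' : Feas M₀' (L.map F) y := by
      refine ⟨fun e' he' => hy.1 e' (Finset.mem_of_mem_erase he'), ?_, ?_, ?_⟩
      · intro A hA
        have h1 : M₀'.rank A = M₀.rank A := M₀.restrict_rank hA
        rw [h1]
        exact hy.2.1 A (hA.trans (Finset.erase_subset e M₀.E))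
      · show ∑ e' ∈ M₀.E.erase e, y e' = (M₀'.rank M₀'.E : ℝ)
        rw [hsums, hy.2.2.1, hrE']
      · intro Mi' hMi' A hA
        obtain ⟨Mi, hMi, rfl⟩ := Multiset.mem_map.1 hMi'
        rw [hFrank Mi A hA]
        exact hy.2.2.2 Mi hMi A (hA.trans (hFE Mi))
    obtain ⟨R, hRind, hRcard, hRw, hRg⟩ := IH _ hμ' M₀' (L.map F) hLE' hdeg' rfl y hy'
    have hRsub : R ⊆ M₀.E.erase e := hRind.2
    refine ⟨R, hRind.1, by rw [hRcard, hrE'], ?_, ?_⟩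
    · calc ∑ e' ∈ M₀.E, w e' * x e' ≤ ∑ e' ∈ M₀.E, w e' * y e' := hxy
        _ = ∑ e' ∈ M₀.E.erase e, w e' * y e' :=
            (Finset.sum_erase (f := fun e' => w e' * y e') M₀.E
              (show w e * y e = 0 by rw [hye]; ring)).symm
        _ ≤ ∑ e' ∈ R, w e' := hRw
    · intro Mi hMi T hT
      have heT : e ∉ T := by
        intro h
        exact Finset.notMem_erase e M₀.E (hRsub (Finset.mem_inter.1 (hT h)).1)
      have hTF : T ⊆ (F Mi).E := by
        by_cases h : e ∈ Mi.E
        · have hFeq : F Mi = Mi.restrict (Mi.E.erase e) := by simp only [hFdef]; rw [if_pos h]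
          rw [hFeq]
          intro t ht
          exact Finset.mem_erase.2 ⟨fun hte => heT (hte ▸ ht), (Finset.mem_inter.1 (hT ht)).2⟩
        · have hFeq : F Mi = Mi := by simp only [hFdef]; rw [if_neg h]
          rw [hFeq]
          exact fun t ht => (Finset.mem_inter.1 (hT ht)).2
      have hg := hRg (F Mi) (Multiset.mem_map_of_mem F hMi) T
        (Finset.subset_inter (fun t ht => (Finset.mem_inter.1 (hT ht)).1) hTF)
      rwa [hFrank Mi T hTF] at hg
  -- CASE B : contract a coordinate equal to one
  by_cases hB : ∃ e ∈ M₀.E, y e = 1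
  · obtain ⟨e, heE, hye⟩ := hB
    have hr1 : M₀.rank {e} = 1 := by
      refine le_antisymm (by simpa using M₀.rank_le_card {e}) ?_
      have h1 := hy.2.1 {e} (Finset.singleton_subset_iff.2 heE)
      rw [Finset.sum_singleton, hye] at h1
      exact_mod_cast h1
    set M₀' := M₀.contract {e} with hM₀'def
    set F : FinMatroid α → FinMatroid α :=
      fun Mi => if e ∈ Mi.E then Mi.contract {e} else Mi with hFdef
    have hFE : ∀ Mi : FinMatroid α, (F Mi).E ⊆ Mi.E := by
      intro Mi
      simp only [hFdef]
      by_cases h : e ∈ Mi.E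
      · rw [if_pos h]; exact Finset.sdiff_subset
      · rw [if_neg h]
    have hFEe : ∀ Mi ∈ L, (F Mi).E ⊆ M₀.E \ {e} := by
      intro Mi hMi
      simp only [hFdef]
      by_cases h : e ∈ Mi.E
      · rw [if_pos h]
        exact Finset.sdiff_subset_sdiff (hLE Mi hMi) (subset_refl _)
      · rw [if_neg h]
        exact Finset.subset_sdiff.2 ⟨hLE Mi hMi, Finset.disjoint_singleton_right.2 h⟩
    have hus : ∀ (s : Finset α), s ∪ {e} = insert e s := fun s => by
      rw [Finset.insert_eq, Finset.union_comm]
    have hri1 : ∀ Mi ∈ L, e ∈ Mi.E → Mi.rank {e} = 1 := by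
      intro Mi hMi h
      refine le_antisymm (by simpa using Mi.rank_le_card {e}) ?_
      have h1 := hy.2.2.2 Mi hMi {e} (Finset.singleton_subset_iff.2 h)
      rw [Finset.sum_singleton, hye] at h1
      exact_mod_cast h1
    have hLE' : ∀ Mi' ∈ L.map F, Mi'.E ⊆ M₀'.E := by
      intro Mi' hMi'
      obtain ⟨Mi, hMi, rfl⟩ := Multiset.mem_map.1 hMi'
      exact hFEe Mi hMi
    have hdeg' : ∀ e' ∈ M₀'.E,
        (((L.map F).map (fun Mi => if e' ∈ Mi.E then (1:ℝ) else 0)).sum) ≤ (Δ:ℝ) := by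
      intro e' he'
      have he'E : e' ∈ M₀.E := (Finset.mem_sdiff.1 he').1
      rw [Multiset.map_map]
      refine le_trans (Multiset.sum_map_le_sum_map _ _ fun Mi _ => ?_) (hdeg e' he'E)
      show (if e' ∈ (F Mi).E then (1:ℝ) else 0) ≤ (if e' ∈ Mi.E then (1:ℝ) else 0)
      by_cases h : e' ∈ (F Mi).E
      · rw [if_pos h, if_pos (hFE Mi h)]
      · rw [if_neg h]; split_ifs <;> norm_num
    have hμ' : M₀'.E.card + ((L.map F).map (fun Mi => 3 ^ Mi.E.card)).sum < μ := by
      have hμ1 : M₀'.E.card < M₀.E.card := by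
        show (M₀.E \ {e}).card < M₀.E.card
        refine Finset.card_lt_card ?_
        rw [Finset.ssubset_iff_of_subset Finset.sdiff_subset]
        exact ⟨e, heE, by simp⟩
      have hμ2 : ((L.map F).map (fun Mi => 3 ^ Mi.E.card)).sum
          ≤ (L.map (fun Mi => 3 ^ Mi.E.card)).sum := by
        rw [Multiset.map_map]
        refine Multiset.sum_map_le_sum_map _ _ fun Mi _ => ?_
        show 3 ^ (F Mi).E.card ≤ 3 ^ Mi.E.card
        exact Nat.pow_le_pow_right (by norm_num) (Finset.card_le_card (hFE Mi))
      omega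
    have hbase2 : M₀'.rank M₀'.E + 1 = M₀.rank M₀.E := by
      have heE' : (M₀.E \ {e}) ∪ {e} = M₀.E := by
        rw [Finset.sdiff_union_self_eq_union]
        exact Finset.union_eq_left.2 (Finset.singleton_subset_iff.2 heE)
      have h2 := M₀.contract_rank {e} (subset_refl (M₀.E \ {e}))
      rw [hr1, heE'] at h2
      exact h2
    have hy' : Feas M₀' (L.map F) y := by
      refine ⟨fun e' he' => hy.1 e' (Finset.mem_sdiff.1 he').1, ?_, ?_, ?_⟩
      · intro A hA
        have heA : e ∉ A := fun h => (Finset.mem_sdiff.1 (hA h)).2 (Finset.mem_singleton_self e)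
        have hdisj : Disjoint A ({e} : Finset α) := Finset.disjoint_singleton_right.2 heA
        have hsub : A ∪ {e} ⊆ M₀.E := Finset.union_subset (hA.trans Finset.sdiff_subset)
          (Finset.singleton_subset_iff.2 heE)
        have h1 := hy.2.1 (A ∪ {e}) hsub
        rw [Finset.sum_union hdisj, Finset.sum_singleton, hye] at h1
        have h2 := M₀.contract_rank {e} hA
        rw [hr1] at h2
        have h3 : (M₀'.rank A : ℝ) + 1 = (M₀.rank (A ∪ {e}) : ℝ) := by exact_mod_cast h2
        linarith
      · show ∑ e' ∈ M₀.E \ {e}, y e' = (M₀'.rank M₀'.E : ℝ)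
        have h3 : ∑ e' ∈ M₀.E \ {e}, y e' = ∑ e' ∈ M₀.E, y e' - 1 := by
          rw [Finset.sum_sdiff_eq_sub (Finset.singleton_subset_iff.2 heE),
            Finset.sum_singleton, hye]
        have h4 : (M₀'.rank M₀'.E : ℝ) + 1 = (M₀.rank M₀.E : ℝ) := by exact_mod_cast hbase2
        rw [h3, hy.2.2.1]
        linarith
      · intro Mi' hMi' A hA
        obtain ⟨Mi, hMi, rfl⟩ := Multiset.mem_map.1 hMi'
        by_cases h : e ∈ Mi.E
        · have hFeq : F Mi = Mi.contract {e} := by simp only [hFdef]; rw [if_pos h]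
          rw [hFeq] at hA ⊢
          have heA : e ∉ A := fun hh =>
            (Finset.mem_sdiff.1 (hA hh)).2 (Finset.mem_singleton_self e)
          have hdisj : Disjoint A ({e} : Finset α) := Finset.disjoint_singleton_right.2 heA
          have hsub : A ∪ {e} ⊆ Mi.E := Finset.union_subset (hA.trans Finset.sdiff_subset)
            (Finset.singleton_subset_iff.2 h)
          have h1 := hy.2.2.2 Mi hMi (A ∪ {e}) hsub
          rw [Finset.sum_union hdisj, Finset.sum_singleton, hye] at h1
          have h2 := Mi.contract_rank {e} hA
          rw [hri1 Mi hMi h] at h2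
          have h3 : ((Mi.contract {e}).rank A : ℝ) + 1 = (Mi.rank (A ∪ {e}) : ℝ) := by
            exact_mod_cast h2
          linarith
        · have hFeq : F Mi = Mi := by simp only [hFdef]; rw [if_neg h]
          rw [hFeq] at hA ⊢
          exact hy.2.2.2 Mi hMi A hA
    obtain ⟨R', hRind, hRcard, hRw, hRg⟩ := IH _ hμ' M₀' (L.map F) hLE' hdeg' rfl y hy'
    have hR'sub : R' ⊆ M₀.E \ {e} := hRind.1
    have heR' : e ∉ R' := fun h => (Finset.mem_sdiff.1 (hR'sub h)).2 (Finset.mem_singleton_self e)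
    have hRrank : M₀.rank (R' ∪ {e}) = R'.card + 1 := by
      have := hRind.2
      rw [hr1] at this
      exact this
    refine ⟨insert e R', ?_, ?_, ?_, ?_⟩
    · apply M₀.indep_of_rank_eq
      rw [Finset.card_insert_of_notMem heR', ← hus R', hRrank]
    · rw [Finset.card_insert_of_notMem heR', hRcard]
      exact hbase2
    · have hsplit : ∑ e' ∈ M₀.E, w e' * y e'
          = ∑ e' ∈ M₀.E \ {e}, w e' * y e' + w e * y e := by
        rw [← Finset.sum_sdiff (Finset.singleton_subset_iff.2 heE), Finset.sum_singleton]
      calc ∑ e' ∈ M₀.E, w e' * x e' ≤ ∑ e' ∈ M₀.E, w e' * y e' := hxy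
        _ = ∑ e' ∈ M₀.E \ {e}, w e' * y e' + w e * y e := hsplit
        _ ≤ ∑ e' ∈ R', w e' + w e := by
            rw [hye, mul_one]
            exact add_le_add hRw le_rfl
        _ = ∑ e' ∈ insert e R', w e' := by rw [Finset.sum_insert heR']; ring
    · intro Mi hMi T hT
      by_cases h : e ∈ Mi.E
      · have hFeq : F Mi = Mi.contract {e} := by simp only [hFdef]; rw [if_pos h]
        have hTsub : T.erase e ⊆ R' ∩ (F Mi).E := by
          rw [hFeq]
          intro t ht
          obtain ⟨htne, htT⟩ := Finset.mem_erase.1 ht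
          obtain ⟨htR, htMi⟩ := Finset.mem_inter.1 (hT htT)
          refine Finset.mem_inter.2 ⟨?_, Finset.mem_sdiff.2 ⟨htMi, by simp [htne]⟩⟩
          rcases Finset.mem_insert.1 htR with hh | hh
          · exact absurd hh htne
          · exact hh
        have hgT := hRg (F Mi) (Multiset.mem_map_of_mem F hMi) (T.erase e) hTsub
        have hTE' : T.erase e ⊆ Mi.E \ {e} := by
          intro t ht
          obtain ⟨htne, htT⟩ := Finset.mem_erase.1 ht
          exact Finset.mem_sdiff.2 ⟨(Finset.mem_inter.1 (hT htT)).2, by simp [htne]⟩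
        have hcr := Mi.contract_rank {e} hTE'
        rw [hri1 Mi hMi h] at hcr
        rw [hFeq] at hgT
        by_cases heT : e ∈ T
        · have hTeq : (T.erase e) ∪ {e} = T := by
            rw [hus, Finset.insert_erase heT]
          rw [hTeq] at hcr
          have hcard : T.card = (T.erase e).card + 1 := by
            have h1 := Finset.card_erase_of_mem heT
            have h2 : 1 ≤ T.card := Finset.card_pos.2 ⟨e, heT⟩
            omega
          calc T.card = (T.erase e).card + 1 := hcard
            _ ≤ Δ * (Mi.contract {e}).rank (T.erase e) + 1 := by omega
            _ ≤ Δ * (Mi.contract {e}).rank (T.erase e) + Δ := by omega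
            _ = Δ * ((Mi.contract {e}).rank (T.erase e) + 1) := by ring
            _ = Δ * Mi.rank T := by rw [hcr]
        · have hTe : T.erase e = T := Finset.erase_eq_of_notMem heT
          rw [hTe] at hgT hcr
          have h2 : Mi.rank (T ∪ {e}) ≤ Mi.rank T + 1 := by
            rw [hus]
            exact Mi.rank_insert_le e T
          have h3 : (Mi.contract {e}).rank T ≤ Mi.rank T := by omega
          calc T.card ≤ Δ * (Mi.contract {e}).rank T := hgT
            _ ≤ Δ * Mi.rank T := Nat.mul_le_mul_left Δ h3
      · have hFeq : F Mi = Mi := by simp only [hFdef]; rw [if_neg h]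
        have hTsub : T ⊆ R' ∩ (F Mi).E := by
          rw [hFeq]
          intro t ht
          obtain ⟨htR, htMi⟩ := Finset.mem_inter.1 (hT ht)
          refine Finset.mem_inter.2 ⟨?_, htMi⟩
          rcases Finset.mem_insert.1 htR with hh | hh
          · exact absurd (hh ▸ htMi) h
          · exact hh
        have hgT := hRg (F Mi) (Multiset.mem_map_of_mem F hMi) T hTsub
        rwa [hFeq] at hgT
  -- CASE C : refine at a proper nonempty tight set of some inner matroid
  by_cases hC : ∃ Mi ∈ L, ∃ S, S ⊆ Mi.E ∧ S.Nonempty ∧ S ≠ Mi.E ∧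
      ∑ e ∈ S, y e = (Mi.rank S : ℝ)
  · obtain ⟨Mi, hMi, S, hSE, hSne, hSneq, hStight⟩ := hC
    set L' : Multiset (FinMatroid α) :=
      (Mi.restrict S) ::ₘ (Mi.contract S) ::ₘ L.erase Mi with hL'def
    have hLerase : L = Mi ::ₘ L.erase Mi := (Multiset.cons_erase hMi).symm
    have hLE'' : ∀ Mj ∈ L.erase Mi, Mj ∈ L := fun Mj h => Multiset.mem_of_mem_erase h
    have hLE' : ∀ Mj ∈ L', Mj.E ⊆ M₀.E := by
      intro Mj hMj
      rw [hL'def] at hMj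
      rcases Multiset.mem_cons.1 hMj with rfl | hMj
      · exact hSE.trans (hLE Mi hMi)
      rcases Multiset.mem_cons.1 hMj with rfl | hMj
      · exact Finset.sdiff_subset.trans (hLE Mi hMi)
      · exact hLE Mj (hLE'' Mj hMj)
    have hdeg' : ∀ e ∈ M₀.E,
        ((L'.map (fun Mj => if e ∈ Mj.E then (1:ℝ) else 0)).sum) ≤ (Δ:ℝ) := by
      intro e he
      have h0 := hdeg e he
      conv_lhs at h0 => rw [hLerase]
      rw [Multiset.map_cons, Multiset.sum_cons] at h0
      rw [hL'def, Multiset.map_cons, Multiset.sum_cons, Multiset.map_cons, Multiset.sum_cons]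
      have hsplit : (if e ∈ (Mi.restrict S).E then (1:ℝ) else 0)
          + (if e ∈ (Mi.contract S).E then (1:ℝ) else 0)
          = (if e ∈ Mi.E then (1:ℝ) else 0) := by
        show (if e ∈ S then (1:ℝ) else 0) + (if e ∈ Mi.E \ S then (1:ℝ) else 0)
          = (if e ∈ Mi.E then (1:ℝ) else 0)
        by_cases h1 : e ∈ S
        · rw [if_pos h1, if_pos (hSE h1), if_neg (fun hh => (Finset.mem_sdiff.1 hh).2 h1)]
          ring
        · rw [if_neg h1]
          by_cases h2 : e ∈ Mi.E
          · rw [if_pos h2, if_pos (Finset.mem_sdiff.2 ⟨h2, h1⟩)]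
            ring
          · rw [if_neg h2, if_neg (fun hh => h2 (Finset.mem_sdiff.1 hh).1)]
            ring
      linarith
    have hμ' : M₀.E.card + (L'.map (fun Mj => 3 ^ Mj.E.card)).sum < μ := by
      have hcardS : 1 ≤ S.card := Finset.card_pos.2 hSne
      have hcardD : 1 ≤ (Mi.E \ S).card := by
        refine Finset.card_pos.2 ?_
        rw [Finset.sdiff_nonempty]
        intro hcon
        exact hSneq (le_antisymm hSE hcon)
      have hcardsum : S.card + (Mi.E \ S).card = Mi.E.card := by
        rw [Finset.card_sdiff_of_subset hSE]
        have := Finset.card_le_card hSE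
        omega
      have hpow : 3 ^ S.card + 3 ^ (Mi.E \ S).card < 3 ^ Mi.E.card := by
        have h1 : 3 ^ (S.card + 1) ≤ 3 ^ Mi.E.card :=
          Nat.pow_le_pow_right (by norm_num) (by omega)
        have h2 : 3 ^ ((Mi.E \ S).card + 1) ≤ 3 ^ Mi.E.card :=
          Nat.pow_le_pow_right (by norm_num) (by omega)
        have h3 : 3 ^ (S.card + 1) = 3 * 3 ^ S.card := by ring
        have h4 : 3 ^ ((Mi.E \ S).card + 1) = 3 * 3 ^ (Mi.E \ S).card := by ring
        have h5 : 0 < 3 ^ Mi.E.card := Nat.pow_pos (by norm_num)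
        omega
      have hLsum : (L.map (fun Mj => 3 ^ Mj.E.card)).sum
          = 3 ^ Mi.E.card + ((L.erase Mi).map (fun Mj => 3 ^ Mj.E.card)).sum := by
        conv_lhs => rw [hLerase]
        rw [Multiset.map_cons, Multiset.sum_cons]
      have hL'sum : (L'.map (fun Mj => 3 ^ Mj.E.card)).sum
          = 3 ^ S.card + 3 ^ (Mi.E \ S).card
            + ((L.erase Mi).map (fun Mj => 3 ^ Mj.E.card)).sum := by
        rw [hL'def, Multiset.map_cons, Multiset.sum_cons, Multiset.map_cons, Multiset.sum_cons]
        show 3 ^ S.card + (3 ^ (Mi.E \ S).card + _) = _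
        ring
      omega
    have hy' : Feas M₀ L' y := by
      refine ⟨hy.1, hy.2.1, hy.2.2.1, ?_⟩
      intro Mj hMj A hA
      rw [hL'def] at hMj
      rcases Multiset.mem_cons.1 hMj with rfl | hMj'
      · have hA' : A ⊆ S := hA
        rw [Mi.restrict_rank hA']
        exact hy.2.2.2 Mi hMi A (hA'.trans hSE)
      rcases Multiset.mem_cons.1 hMj' with rfl | hMj''
      · have hA' : A ⊆ Mi.E \ S := hA
        have hdisj : Disjoint A S := by
          refine Finset.disjoint_left.2 fun a haA haS => ?_
          exact (Finset.mem_sdiff.1 (hA' haA)).2 haS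
        have hsub : A ∪ S ⊆ Mi.E :=
          Finset.union_subset (hA'.trans Finset.sdiff_subset) hSE
        have h1 := hy.2.2.2 Mi hMi (A ∪ S) hsub
        rw [Finset.sum_union hdisj, hStight] at h1
        have h2 := Mi.contract_rank S hA'
        have h3 : ((Mi.contract S).rank A : ℝ) + (Mi.rank S : ℝ)
            = (Mi.rank (A ∪ S) : ℝ) := by exact_mod_cast h2
        linarith
      · exact hy.2.2.2 Mj (hLE'' Mj hMj'') A hA
    obtain ⟨R, hRind, hRcard, hRw, hRg⟩ := IH _ hμ' M₀ L' hLE' hdeg' rfl y hy'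
    refine ⟨R, hRind, hRcard, le_trans hxy hRw, ?_⟩
    intro Mj hMj T hT
    by_cases hMjeq : Mj = Mi
    · subst hMjeq
      have hg1 := hRg (Mj.restrict S) (Multiset.mem_cons_self _ _) (T ∩ S)
        (by
          refine Finset.subset_inter (Finset.inter_subset_left.trans ?_) Finset.inter_subset_right
          exact hT.trans Finset.inter_subset_left)
      have hg2 := hRg (Mj.contract S)
        (Multiset.mem_cons_of_mem (Multiset.mem_cons_self _ _)) (T \ S)
        (by
          refine Finset.subset_inter (Finset.sdiff_subset.trans (hT.trans Finset.inter_subset_left)) ?_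
          intro t ht
          obtain ⟨htT, htS⟩ := Finset.mem_sdiff.1 ht
          exact Finset.mem_sdiff.2 ⟨(Finset.mem_inter.1 (hT htT)).2, htS⟩)
      have hr1 : (Mj.restrict S).rank (T ∩ S) = Mj.rank (T ∩ S) :=
        Mj.restrict_rank Finset.inter_subset_right
      have hTdS : T \ S ⊆ Mj.E \ S := by
        intro t ht
        obtain ⟨htT, htS⟩ := Finset.mem_sdiff.1 ht
        exact Finset.mem_sdiff.2 ⟨(Finset.mem_inter.1 (hT htT)).2, htS⟩
      have hr2 := Mj.contract_rank S hTdS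
      have hTuS : (T \ S) ∪ S = T ∪ S := Finset.sdiff_union_self_eq_union
      rw [hTuS] at hr2
      have hsubm := Mj.submodular T S
      have hcard : T.card = (T ∩ S).card + (T \ S).card :=
        (Finset.card_inter_add_card_sdiff T S).symm
      rw [hr1] at hg1
      -- combine everything
      have hkey : Mj.rank (T ∩ S) + (Mj.contract S).rank (T \ S) ≤ Mj.rank T := by omega
      calc T.card = (T ∩ S).card + (T \ S).card := hcard
        _ ≤ Δ * Mj.rank (T ∩ S) + Δ * (Mj.contract S).rank (T \ S) := by omega
        _ = Δ * (Mj.rank (T ∩ S) + (Mj.contract S).rank (T \ S)) := by ring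
        _ ≤ Δ * Mj.rank T := Nat.mul_le_mul_left Δ hkey
    · have hMj' : Mj ∈ L.erase Mi := (Multiset.mem_erase_of_ne hMjeq).2 hMj
      exact hRg Mj (Multiset.mem_cons_of_mem (Multiset.mem_cons_of_mem hMj')) T hT
  -- CASE D : drop a sparse inner matroid
  by_cases hD : ∃ Mi ∈ L, ∀ T ⊆ Mi.E, T.card ≤ Δ * Mi.rank T
  · obtain ⟨Mi, hMi, hsparse⟩ := hD
    have hLerase : L = Mi ::ₘ L.erase Mi := (Multiset.cons_erase hMi).symm
    have hLE' : ∀ Mj ∈ L.erase Mi, Mj.E ⊆ M₀.E :=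
      fun Mj h => hLE Mj (Multiset.mem_of_mem_erase h)
    have hdeg' : ∀ e ∈ M₀.E,
        (((L.erase Mi).map (fun Mj => if e ∈ Mj.E then (1:ℝ) else 0)).sum) ≤ (Δ:ℝ) := by
      intro e he
      have h0 := hdeg e he
      conv_lhs at h0 => rw [hLerase]
      rw [Multiset.map_cons, Multiset.sum_cons] at h0
      have : (0:ℝ) ≤ (if e ∈ Mi.E then (1:ℝ) else 0) := by split_ifs <;> norm_num
      linarith
    have hμ' : M₀.E.card + ((L.erase Mi).map (fun Mj => 3 ^ Mj.E.card)).sum < μ := by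
      have hLsum : (L.map (fun Mj => 3 ^ Mj.E.card)).sum
          = 3 ^ Mi.E.card + ((L.erase Mi).map (fun Mj => 3 ^ Mj.E.card)).sum := by
        conv_lhs => rw [hLerase]
        rw [Multiset.map_cons, Multiset.sum_cons]
      have : 0 < 3 ^ Mi.E.card := Nat.pow_pos (by norm_num)
      omega
    have hy' : Feas M₀ (L.erase Mi) y :=
      ⟨hy.1, hy.2.1, hy.2.2.1,
        fun Mj hMj A hA => hy.2.2.2 Mj (Multiset.mem_of_mem_erase hMj) A hA⟩
    obtain ⟨R, hRind, hRcard, hRw, hRg⟩ := IH _ hμ' M₀ (L.erase Mi) hLE' hdeg' rfl y hy'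
    refine ⟨R, hRind, hRcard, le_trans hxy hRw, ?_⟩
    intro Mj hMj T hT
    by_cases hMjeq : Mj = Mi
    · subst hMjeq
      exact hsparse T (hT.trans Finset.inter_subset_right)
    · exact hRg Mj ((Multiset.mem_erase_of_ne hMjeq).2 hMj) T hT
  -- FINAL CASE : contradiction via the counting argument
  exfalso
  push_neg at hA hB hC hD
  have hfrac : ∀ e ∈ M₀.E, 0 < y e ∧ y e < 1 := by
    intro e he
    constructor
    · exact lt_of_le_of_ne (hy.1 e he) (fun h => hA e he h.symm)
    · exact lt_of_le_of_ne (feas_le_one hy he) (hB e he)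
  have hnotight : ∀ Mi ∈ L, ∀ S, S ⊆ Mi.E → S.Nonempty → S ≠ Mi.E →
      ∑ e ∈ S, y e ≠ (Mi.rank S : ℝ) := by
    intro Mi hMi S h1 h2 h3
    exact hC Mi hMi S h1 h2 h3
  have hnosparse : ∀ Mi ∈ L, ∃ T, T ⊆ Mi.E ∧ Δ * Mi.rank T < T.card := by
    intro Mi hMi
    obtain ⟨T, hT1, hT2⟩ := hD Mi hMi
    exact ⟨T, hT1, by omega⟩
  exact no_stuck Δ hΔ1 w M₀ L hLE hdeg hne y hy hys hyw hy2 hfrac hnotight hnosparse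

end IterRef

/-- **Main theorem with the uniform choice `qᵢ = Δ` (maximum overlap).**
With `Δ` the maximum, over elements `e ∈ N`, of the number of matroids `Mᵢ` (`i ∈ [k]`)
whose ground set contains `e`, any point `x` in the base polytope of `M₀` lying in each
matroid polytope `P_{Iᵢ}` can be rounded to a basis `R` of `M₀` of weight at least `wᵀx`
such that `R ∩ Nᵢ` is `Δ`-approximately independent in `Mᵢ` for every `i ∈ [k]`. -/
theorem iterative_refinement_uniform_delta
    {α : Type*} (N : Finset α) (k : ℕ)
    (M₀ : FinMatroid α) (hE₀ : M₀.E = N)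
    (M : Fin k → FinMatroid α) (hE : ∀ i, (M i).E ⊆ N)
    (w : α → ℝ) (Δ : ℕ)
    (hΔ : Δ = N.sup fun e => (Finset.univ.filter (fun i => e ∈ (M i).E)).card)
    (hΔ1 : 1 ≤ Δ)
    (x : α → ℝ)
    (hx_nonneg : ∀ e ∈ N, 0 ≤ x e)
    (hx₀ : ∀ A ⊆ N, ∑ e ∈ A, x e ≤ (M₀.rank A : ℝ))
    (hx₀_base : ∑ e ∈ N, x e = (M₀.rank N : ℝ))
    (hx : ∀ i, ∀ A ⊆ (M i).E, ∑ e ∈ A, x e ≤ ((M i).rank A : ℝ)) :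
    ∃ R : Finset α,
      (M₀.Indep R ∧ R.card = M₀.rank M₀.E) ∧
      (∑ e ∈ N, w e * x e ≤ ∑ e ∈ R, w e) ∧
      (∀ i, ∀ T ⊆ R ∩ (M i).E, T.card ≤ Δ * (M i).rank T) := by
  subst hE₀
  set L : Multiset (FinMatroid α) := Finset.univ.val.map M with hLdef
  have hmemM : ∀ i : Fin k, M i ∈ L := by
    intro i
    rw [hLdef]
    exact Multiset.mem_map.2 ⟨i, (by simp), rfl⟩
  have hLE' : ∀ Mi ∈ L, Mi.E ⊆ M₀.E := by
    intro Mi hMi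
    obtain ⟨i, _, rfl⟩ := Multiset.mem_map.1 hMi
    exact hE i
  have hdeg' : ∀ e ∈ M₀.E,
      ((L.map (fun Mi => if e ∈ Mi.E then (1:ℝ) else 0)).sum) ≤ (Δ:ℝ) := by
    intro e he
    have h1 : ((L.map (fun Mi => if e ∈ Mi.E then (1:ℝ) else 0)).sum)
        = ∑ i : Fin k, (if e ∈ (M i).E then (1:ℝ) else 0) := by
      rw [hLdef, Multiset.map_map]
      rfl
    have h2 : ∑ i : Fin k, (if e ∈ (M i).E then (1:ℝ) else 0)
        = ((Finset.univ.filter (fun i => e ∈ (M i).E)).card : ℝ) := by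
      rw [Finset.card_filter]
      push_cast
      exact Finset.sum_congr rfl fun i _ => by split_ifs <;> norm_num
    have h3 : (Finset.univ.filter (fun i => e ∈ (M i).E)).card ≤ Δ := by
      rw [hΔ]
      exact Finset.le_sup (f := fun e => (Finset.univ.filter (fun i => e ∈ (M i).E)).card) he
    rw [h1, h2]
    exact_mod_cast h3
  have hxFeas : IterRef.Feas M₀ L x := by
    refine ⟨hx_nonneg, hx₀, hx₀_base, ?_⟩
    intro Mi hMi A hA
    obtain ⟨i, _, rfl⟩ := Multiset.mem_map.1 hMi
    exact hx i A hA
  obtain ⟨R, h1, h2, h3, h4⟩ := IterRef.main_lemma Δ hΔ1 w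
    (M₀.E.card + (L.map (fun Mi => 3 ^ Mi.E.card)).sum) M₀ L hLE' hdeg' rfl x hxFeas
  exact ⟨R, ⟨h1, h2⟩, h3, fun i T hT => h4 (M i) (hmemM i) T hT⟩
end
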